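/- arXiv:2507.14772 — 4 statements merged into one kernel-verified Lean document; each statement's English description precedes it below -/
import Mathlib

section
/- Let λ, κ ∈ ℝ and 0 < T ≤ ∞. Let u, b : [0,1]×[0,T) → ℝ be infinitely differentiable and satisfy ∂ₜb(x,t) + u(x,t)·∂ₓb(x,t) = κ·b(x,t)·∂ₓu(x,t) for all (x,t) ∈ [0,1]×[0,T). Let γ(α₀,·) be a Lagrangian trajectory starting at α₀ ∈ [0,1], and suppose b₀ := b(·,0) has a zero of order m ∈ ℤ⁺ at α₀. Then for every t ∈ [0,T): (a) ∂ₓⁿb(γ(α₀,t),t) = 0 for every integer 0 ≤ n ≤ m−1; (b) ∂ₓᵐb(γ(α₀,t),t) = b₀^{(m)}(α₀) · γ_α(α₀,t)^{κ−m}, where γ_α(α₀,t) := exp(∫₀ᵗ ∂ₓu(γ(α₀,s),s) ds) and the power is a real power of a positive base; in particular ∂ₓᵐb(γ(α₀,t),t) ≠ 0. -/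
open Real Set Filter Topology MeasureTheory intervalIntegral

noncomputable section

/-- Spatial derivative `∂ₓ f (x,t)`. -/
def pdx (f : ℝ → ℝ → ℝ) (x t : ℝ) : ℝ := deriv (fun y => f y t) x

/-- Second spatial derivative `∂ₓ² f (x,t)`. -/
def pdxx (f : ℝ → ℝ → ℝ) (x t : ℝ) : ℝ := iteratedDeriv 2 (fun y => f y t) x

/-- Time derivative `∂ₜ f (x,t)`. -/
def pdt (f : ℝ → ℝ → ℝ) (x t : ℝ) : ℝ := deriv (fun s => f x s) t

/-- Mixed derivative `∂ₜ∂ₓ f (x,t)`. -/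
def pdtx (f : ℝ → ℝ → ℝ) (x t : ℝ) : ℝ := deriv (fun s => pdx f x s) t

/-- The nonlocal term `I(t)`. -/
def Iterm (lam kappa : ℝ) (u b : ℝ → ℝ → ℝ) (t : ℝ) : ℝ :=
  (lam + kappa) * (∫ y in (0:ℝ)..1, (pdx b y t) ^ 2)
    - (lam + 1) * (∫ y in (0:ℝ)..1, (pdx u y t) ^ 2)

/-- `(u,b)` is a smooth solution of the generalized system on `[0,1] × [0,T)`
(the time `T` is an extended real, allowing `T = ∞`). -/
def GSys (lam kappa : ℝ) (T : EReal) (u b : ℝ → ℝ → ℝ) : Prop :=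
  ContDiff ℝ (⊤ : ℕ∞) (fun p : ℝ × ℝ => u p.1 p.2) ∧
  ContDiff ℝ (⊤ : ℕ∞) (fun p : ℝ × ℝ => b p.1 p.2) ∧
  ∀ x ∈ Icc (0:ℝ) 1, ∀ t : ℝ, 0 ≤ t → (t : EReal) < T →
    (pdtx u x t + u x t * pdxx u x t
      = lam * (pdx u x t) ^ 2 - lam * (pdx b x t) ^ 2 + kappa * b x t * pdxx b x t
        + Iterm lam kappa u b t) ∧
    (pdt b x t + u x t * pdx b x t = kappa * b x t * pdx u x t)

/-- Dirichlet boundary conditions on `[0,T)`. -/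
def DirichletBC (T : EReal) (u b : ℝ → ℝ → ℝ) : Prop :=
  ∀ t : ℝ, 0 ≤ t → (t : EReal) < T →
    u 0 t = 0 ∧ u 1 t = 0 ∧ b 0 t = 0 ∧ b 1 t = 0

/-- Periodic boundary conditions on `[0,T)`. -/
def PeriodicBC (T : EReal) (u b : ℝ → ℝ → ℝ) : Prop :=
  ∀ t : ℝ, 0 ≤ t → (t : EReal) < T →
    u 0 t = u 1 t ∧ pdx u 0 t = pdx u 1 t ∧ b 0 t = b 1 t ∧ pdx b 0 t = pdx b 1 t

/-- `γ` is a Lagrangian trajectory for `u` starting at `α₀`, on the time interval `[0,T)`. -/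
def Traj (T : EReal) (u : ℝ → ℝ → ℝ) (α₀ : ℝ) (γ : ℝ → ℝ) : Prop :=
  γ 0 = α₀ ∧ ∀ t : ℝ, 0 ≤ t → (t : EReal) < T →
    γ t ∈ Icc (0:ℝ) 1 ∧ HasDerivAt γ (u (γ t) t) t

/-- The Jacobian `γ_α(α₀,t) = exp (∫₀ᵗ ∂ₓu(γ(α₀,s),s) ds)` along a trajectory `γ`. -/
def Jac (u : ℝ → ℝ → ℝ) (γ : ℝ → ℝ) (t : ℝ) : ℝ :=
  Real.exp (∫ s in (0:ℝ)..t, pdx u (γ s) s)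

/-- `f` has a zero of order `m` at `x₀`. -/
def ZeroOfOrder (f : ℝ → ℝ) (m : ℕ) (x₀ : ℝ) : Prop :=
  (∀ n < m, iteratedDeriv n f x₀ = 0) ∧ iteratedDeriv m f x₀ ≠ 0

/- ============================================================
   Auxiliary machinery
   ============================================================ -/

open scoped ContDiff

/-- Directional derivative of a function of two real variables. -/
def Dv (v : ℝ × ℝ) (H : ℝ × ℝ → ℝ) : ℝ × ℝ → ℝ := fun p => fderiv ℝ H p v

lemma Dv.contDiff {H : ℝ × ℝ → ℝ} (hH : ContDiff ℝ ∞ H) (v : ℝ × ℝ) :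
    ContDiff ℝ ∞ (Dv v H) := by
  have h1 : ContDiff ℝ ∞ (fderiv ℝ H) := hH.fderiv_right (by simp)
  exact (ContinuousLinearMap.apply ℝ ℝ v).contDiff.comp h1

lemma Dv.diff {H : ℝ × ℝ → ℝ} (hH : ContDiff ℝ ∞ H) : Differentiable ℝ H :=
  hH.differentiable (by simp)

lemma Dv.slice_x {H : ℝ × ℝ → ℝ} (hH : Differentiable ℝ H) (x t : ℝ) :
    HasDerivAt (fun y => H (y, t)) (Dv (1, 0) H (x, t)) x :=
  (hH (x, t)).hasFDerivAt.comp_hasDerivAt x ((hasDerivAt_id x).prodMk (hasDerivAt_const x t))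

lemma Dv.slice_t {H : ℝ × ℝ → ℝ} (hH : Differentiable ℝ H) (x t : ℝ) :
    HasDerivAt (fun s => H (x, s)) (Dv (0, 1) H (x, t)) t :=
  (hH (x, t)).hasFDerivAt.comp_hasDerivAt t ((hasDerivAt_const t x).prodMk (hasDerivAt_id t))

lemma Dv.chain {H : ℝ × ℝ → ℝ} (hH : Differentiable ℝ H) {γ : ℝ → ℝ} {c t : ℝ}
    (hγ : HasDerivAt γ c t) :
    HasDerivAt (fun s => H (γ s, s)) (c * Dv (1,0) H (γ t, t) + Dv (0,1) H (γ t, t)) t := by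
  have h := HasFDerivAt.comp_hasDerivAt (f := fun s => (γ s, s)) t
    (hH (γ t, t)).hasFDerivAt (hγ.prodMk (hasDerivAt_id t))
  refine h.congr_deriv ?_
  have hv : ((c, 1) : ℝ × ℝ) = c • ((1:ℝ), (0:ℝ)) + ((0:ℝ), (1:ℝ)) := by
    simp [Prod.ext_iff]
  rw [hv, map_add, ContinuousLinearMap.map_smul]
  simp [Dv, smul_eq_mul]

lemma Dv.comm {H : ℝ × ℝ → ℝ} (hH : ContDiff ℝ ∞ H) (v w : ℝ × ℝ) :
    Dv v (Dv w H) = Dv w (Dv v H) := by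
  funext p
  have hd : ∀ q, HasFDerivAt H (fderiv ℝ H q) q := fun q => (Dv.diff hH q).hasFDerivAt
  have h1 : ContDiff ℝ ∞ (fderiv ℝ H) := hH.fderiv_right (by simp)
  have hd2 : HasFDerivAt (fderiv ℝ H) (fderiv ℝ (fderiv ℝ H) p) p :=
    (h1.differentiable (by simp) p).hasFDerivAt
  have hsym := second_derivative_symmetric hd hd2
  have key : ∀ z : ℝ × ℝ, ∀ e : ℝ × ℝ,
      fderiv ℝ (Dv z H) p e = fderiv ℝ (fderiv ℝ H) p e z := by
    intro z e
    have h2 : HasFDerivAt (Dv z H)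
        (((ContinuousLinearMap.apply ℝ ℝ z)).comp (fderiv ℝ (fderiv ℝ H) p)) p :=
      (ContinuousLinearMap.apply ℝ ℝ z).hasFDerivAt.comp p hd2
    rw [h2.fderiv]; rfl
  show fderiv ℝ (Dv w H) p v = fderiv ℝ (Dv v H) p w
  rw [key w v, key v w, hsym v w]

lemma iter_contDiff {H : ℝ × ℝ → ℝ} (hH : ContDiff ℝ ∞ H) (n : ℕ) :
    ContDiff ℝ ∞ ((Dv (1,0))^[n] H) := by
  induction n with
  | zero => exact hH
  | succ n ih => rw [Function.iterate_succ_apply']; exact Dv.contDiff ih _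

lemma slice_contDiff {H : ℝ × ℝ → ℝ} (hH : ContDiff ℝ ∞ H) (t : ℝ) :
    ContDiff ℝ ∞ (fun y => H (y, t)) :=
  hH.comp (contDiff_id.prodMk contDiff_const)

lemma slice_contDiff_t {H : ℝ × ℝ → ℝ} (hH : ContDiff ℝ ∞ H) (x : ℝ) :
    ContDiff ℝ ∞ (fun s => H (x, s)) :=
  hH.comp (contDiff_const.prodMk contDiff_id)

lemma iteratedDeriv_slice {H : ℝ × ℝ → ℝ} (hH : ContDiff ℝ ∞ H) (n : ℕ) (x t : ℝ) :
    iteratedDeriv n (fun y => H (y, t)) x = (Dv (1,0))^[n] H (x, t) := by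
  induction n generalizing x with
  | zero => simp
  | succ n ih =>
    rw [iteratedDeriv_succ]
    have hfun : iteratedDeriv n (fun y => H (y, t)) = fun y => (Dv (1,0))^[n] H (y, t) :=
      funext fun y => ih (x := y)
    rw [hfun, Function.iterate_succ_apply']
    exact (Dv.slice_x (Dv.diff (iter_contDiff hH n)) x t).deriv

lemma Dt_iter_comm {H : ℝ × ℝ → ℝ} (hH : ContDiff ℝ ∞ H) (n : ℕ) :
    Dv (0,1) ((Dv (1,0))^[n] H) = (Dv (1,0))^[n] (Dv (0,1) H) := by
  induction n generalizing H with
  | zero => rfl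
  | succ n ih =>
    rw [Function.iterate_succ_apply, Function.iterate_succ_apply,
      ih (Dv.contDiff hH _), Dv.comm hH]

lemma my_eqOn_deriv_Icc {f g : ℝ → ℝ} (hf : ContDiff ℝ ∞ f) (hg : ContDiff ℝ ∞ g)
    (h : EqOn f g (Icc 0 1)) : EqOn (deriv f) (deriv g) (Icc 0 1) := by
  have h1 : ∀ x ∈ Ioo (0:ℝ) 1, deriv f x = deriv g x := by
    intro x hx
    have hev : f =ᶠ[𝓝 x] g :=
      eventually_of_mem (Ioo_mem_nhds hx.1 hx.2) (fun y hy => h (Ioo_subset_Icc_self hy))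
    exact hev.deriv_eq
  have hc : IsClosed {x | deriv f x = deriv g x} :=
    isClosed_eq (hf.continuous_deriv (by simp)) (hg.continuous_deriv (by simp))
  have h2 := closure_minimal (fun x hx => h1 x hx) hc
  rw [closure_Ioo (by norm_num : (0:ℝ) ≠ 1)] at h2
  exact fun x hx => h2 hx

lemma iter_cd {f : ℝ → ℝ} (hf : ContDiff ℝ ∞ f) (k : ℕ) : ContDiff ℝ ∞ (iteratedDeriv k f) := by
  rw [iteratedDeriv_eq_iterate]; exact ContDiff.iterate_deriv k hf

lemma my_eqOn_iteratedDeriv_Icc {f g : ℝ → ℝ} (hf : ContDiff ℝ ∞ f) (hg : ContDiff ℝ ∞ g)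
    (h : EqOn f g (Icc 0 1)) (n : ℕ) :
    EqOn (iteratedDeriv n f) (iteratedDeriv n g) (Icc 0 1) := by
  induction n with
  | zero => simpa using h
  | succ n ih =>
    intro x hx
    rw [iteratedDeriv_succ, iteratedDeriv_succ]
    exact my_eqOn_deriv_Icc (iter_cd hf n) (iter_cd hg n) ih hx

lemma my_iteratedDeriv_mul {f g : ℝ → ℝ} (hf : ContDiff ℝ ∞ f) (hg : ContDiff ℝ ∞ g) (n : ℕ)
    (x : ℝ) :
    iteratedDeriv n (fun y => f y * g y) x
      = ∑ j ∈ Finset.range (n+1),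
          (n.choose j : ℝ) * (iteratedDeriv j f x * iteratedDeriv (n-j) g x) := by
  have hdf : ∀ k, Differentiable ℝ (iteratedDeriv k f) := fun k =>
    (iter_cd hf k).differentiable (by simp)
  have hdg : ∀ k, Differentiable ℝ (iteratedDeriv k g) := fun k =>
    (iter_cd hg k).differentiable (by simp)
  induction n generalizing x with
  | zero => simp
  | succ n ih =>
    have hfun : iteratedDeriv n (fun y => f y * g y)
        = fun y => ∑ j ∈ Finset.range (n+1),
            (n.choose j : ℝ) * (iteratedDeriv j f y * iteratedDeriv (n-j) g y) :=
      funext fun y => ih y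
    rw [iteratedDeriv_succ, hfun]
    have hterm : ∀ j, DifferentiableAt ℝ
        (fun y => (n.choose j : ℝ) * (iteratedDeriv j f y * iteratedDeriv (n-j) g y)) x :=
      fun j => (((hdf j x).mul (hdg (n-j) x))).const_mul _
    rw [deriv_fun_sum (fun j _ => hterm j)]
    have hder : ∀ j, deriv
        (fun y => (n.choose j : ℝ) * (iteratedDeriv j f y * iteratedDeriv (n-j) g y)) x
        = (n.choose j : ℝ) * (iteratedDeriv (j+1) f x * iteratedDeriv (n-j) g x
            + iteratedDeriv j f x * iteratedDeriv (n-j+1) g x) := by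
      intro j
      rw [deriv_const_mul (d := fun y => iteratedDeriv j f y * iteratedDeriv (n-j) g y) _
          ((hdf j x).mul (hdg (n-j) x)),
        deriv_fun_mul (hdf j x) (hdg (n-j) x), ← iteratedDeriv_succ, ← iteratedDeriv_succ]
    simp only [hder]
    set A : ℕ → ℝ := fun k => iteratedDeriv k f x with hA
    set B : ℕ → ℝ := fun k => iteratedDeriv k g x with hB
    have key : ∑ j ∈ Finset.range (n+1),
        (n.choose j : ℝ) * (A (j+1) * B (n-j) + A j * B (n-j+1))
        = ∑ j ∈ Finset.range (n+2), ((n+1).choose j : ℝ) * (A j * B (n+1-j)) := by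
      have hsplit : ∑ j ∈ Finset.range (n+1),
          (n.choose j : ℝ) * (A (j+1) * B (n-j) + A j * B (n-j+1))
          = (∑ j ∈ Finset.range (n+1), (n.choose j : ℝ) * (A (j+1) * B (n+1-(j+1))))
            + ∑ j ∈ Finset.range (n+1), (n.choose j : ℝ) * (A j * B (n+1-j)) := by
        rw [← Finset.sum_add_distrib]
        apply Finset.sum_congr rfl
        intro j hj
        have hj' : j ≤ n := Nat.lt_succ_iff.mp (Finset.mem_range.mp hj)
        have h1 : n + 1 - (j+1) = n - j := by omega
        have h2 : n - j + 1 = n + 1 - j := by omega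
        rw [h1, h2]; ring
      rw [hsplit]
      have hrhs : ∑ j ∈ Finset.range (n+2), ((n+1).choose j : ℝ) * (A j * B (n+1-j))
          = (∑ j ∈ Finset.range (n+1), ((n+1).choose (j+1) : ℝ) * (A (j+1) * B (n+1-(j+1))))
            + ((n+1).choose 0 : ℝ) * (A 0 * B (n+1-0)) := Finset.sum_range_succ' _ (n+1)
      rw [hrhs]
      have hpas : ∀ j, (((n+1).choose (j+1) : ℝ)) = (n.choose j : ℝ) + (n.choose (j+1) : ℝ) := by
        intro j; rw [Nat.choose_succ_succ]; push_cast; ring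
      simp only [hpas, add_mul]
      rw [Finset.sum_add_distrib]
      have h2 : ∑ j ∈ Finset.range (n+1), (n.choose (j+1) : ℝ) * (A (j+1) * B (n+1-(j+1)))
            + ((n+1).choose 0 : ℝ) * (A 0 * B (n+1-0))
          = ∑ j ∈ Finset.range (n+1), (n.choose j : ℝ) * (A j * B (n+1-j)) := by
        have hs := Finset.sum_range_succ' (fun j => (n.choose j : ℝ) * (A j * B (n+1-j))) (n+1)
        have hlast := Finset.sum_range_succ (fun j => (n.choose j : ℝ) * (A j * B (n+1-j))) (n+1)
        rw [Nat.choose_succ_self] at hlast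
        simp only [Nat.cast_zero, zero_mul, add_zero] at hlast
        rw [← hlast, hs]
        simp [Nat.choose_zero_right]
      rw [add_assoc, h2]
    rw [key]

lemma my_itd_sub {f g : ℝ → ℝ} (hf : ContDiff ℝ ∞ f) (hg : ContDiff ℝ ∞ g) (n : ℕ) (x : ℝ) :
    iteratedDeriv n (fun y => f y - g y) x = iteratedDeriv n f x - iteratedDeriv n g x := by
  have h1 : iteratedDeriv n (f - g) x = iteratedDeriv n f x - iteratedDeriv n g x := by
    rw [← iteratedDerivWithin_univ, ← iteratedDerivWithin_univ, ← iteratedDerivWithin_univ]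
    exact iteratedDerivWithin_sub (mem_univ x) uniqueDiffOn_univ
      ((hf.of_le (by exact_mod_cast le_top)).contDiffWithinAt)
      ((hg.of_le (by exact_mod_cast le_top)).contDiffWithinAt)
  exact h1

lemma my_itd_const_mul {f : ℝ → ℝ} (hf : ContDiff ℝ ∞ f) (c : ℝ) (n : ℕ) (x : ℝ) :
    iteratedDeriv n (fun y => c * f y) x = c * iteratedDeriv n f x := by
  rw [← iteratedDerivWithin_univ, ← iteratedDerivWithin_univ]
  exact iteratedDerivWithin_const_mul (mem_univ x) uniqueDiffOn_univ c
    ((hf.of_le (by exact_mod_cast le_top)).contDiffWithinAt)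

lemma my_linear_ode {B p : ℝ → ℝ} {c t₀ : ℝ} (ht₀ : 0 ≤ t₀) (hp : Continuous p)
    (hB : ∀ s ∈ Icc (0:ℝ) t₀, HasDerivAt B (c * p s * B s) s) :
    B t₀ = B 0 * Real.exp (c * ∫ s in (0:ℝ)..t₀, p s) := by
  set I : ℝ → ℝ := fun s => ∫ τ in (0:ℝ)..s, p τ with hIdef
  have hI : ∀ s, HasDerivAt I (p s) s := fun s => (hp.integral_hasStrictDerivAt 0 s).hasDerivAt
  set g : ℝ → ℝ := fun s => B s * Real.exp (-(c * I s)) with hgdef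
  have hg : ∀ s ∈ Icc (0:ℝ) t₀, HasDerivAt g 0 s := by
    intro s hs
    have h1 : HasDerivAt (fun s => Real.exp (-(c * I s)))
        (Real.exp (-(c * I s)) * (-(c * p s))) s := (((hI s).const_mul c).neg).exp
    have h2 := (hB s hs).mul h1
    exact h2.congr_deriv (by ring)
  have hconst := constant_of_has_deriv_right_zero
    (fun s hs => (hg s hs).continuousAt.continuousWithinAt)
    (fun s hs => (hg s (Ico_subset_Icc_self hs)).hasDerivWithinAt)
  have hgt := hconst t₀ (by simp [ht₀])
  have hI0 : I 0 = 0 := intervalIntegral.integral_same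
  have hmain : B t₀ * Real.exp (-(c * I t₀)) = B 0 := by
    simpa [hgdef, hI0] using hgt
  have hfin := congrArg (fun z => z * Real.exp (c * I t₀)) hmain
  rw [mul_assoc, ← Real.exp_add] at hfin
  simpa using hfin

/-- Key lemma: the full induction. -/
lemma keyL (kappa : ℝ) (T : EReal)
    (u b : ℝ → ℝ → ℝ)
    (hu : ContDiff ℝ ∞ (fun p : ℝ × ℝ => u p.1 p.2))
    (hb : ContDiff ℝ ∞ (fun p : ℝ × ℝ => b p.1 p.2))
    (hpde : ∀ x ∈ Icc (0:ℝ) 1, ∀ t : ℝ, 0 ≤ t → (t : EReal) < T →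
      pdt b x t + u x t * pdx b x t = kappa * b x t * pdx u x t)
    (α₀ : ℝ)
    (γ : ℝ → ℝ) (hγ : Traj T u α₀ γ)
    (m : ℕ)
    (hord0 : ∀ n < m, iteratedDeriv n (fun x => b x 0) α₀ = 0) :
    ∀ n, n ≤ m → ∀ t : ℝ, 0 ≤ t → (t : EReal) < T →
      (Dv (1,0))^[n] (fun p : ℝ × ℝ => b p.1 p.2) (γ t, t)
        = iteratedDeriv n (fun x => b x 0) α₀
            * Real.exp ((kappa - (n:ℝ)) * ∫ s in (0:ℝ)..t, pdx u (γ s) s) := by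
  set b₂ : ℝ × ℝ → ℝ := fun p : ℝ × ℝ => b p.1 p.2 with hb₂def
  set u₂ : ℝ × ℝ → ℝ := fun p : ℝ × ℝ => u p.1 p.2 with hu₂def
  intro n
  induction n using Nat.strong_induction_on with
  | _ n IH =>
  intro hnm t₀ ht₀ ht₀T
  have hinit : ∀ k : ℕ, (Dv (1,0))^[k] b₂ (α₀, 0) = iteratedDeriv k (fun x => b x 0) α₀ :=
    fun k => (iteratedDeriv_slice hb k α₀ 0).symm
  have hzero : ∀ k, k < n → ∀ s : ℝ, 0 ≤ s → (s : EReal) < T →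
      (Dv (1,0))^[k] b₂ (γ s, s) = 0 := by
    intro k hk s hs0 hsT
    rw [IH k hk (le_trans (Nat.le_of_lt hk) hnm) s hs0 hsT,
      hord0 k (lt_of_lt_of_le hk hnm), zero_mul]
  have hBder : ∀ s : ℝ, 0 ≤ s → (s : EReal) < T →
      HasDerivAt (fun r => (Dv (1,0))^[n] b₂ (γ r, r))
        ((kappa - (n:ℝ)) * Dv (1,0) u₂ (γ s, s) * (Dv (1,0))^[n] b₂ (γ s, s)) s := by
    intro s hs0 hsT
    obtain ⟨hmem, hder⟩ := hγ.2 s hs0 hsT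
    have hchain := Dv.chain (Dv.diff (iter_contDiff hb n)) hder
    convert hchain using 1
    have hSb : ContDiff ℝ ∞ (fun x => b x s) := slice_contDiff hb s
    have hSu : ContDiff ℝ ∞ (fun x => u x s) := slice_contDiff hu s
    have hSB : ContDiff ℝ ∞ (fun x => Dv (1,0) b₂ (x, s)) := slice_contDiff (Dv.contDiff hb _) s
    have hSU : ContDiff ℝ ∞ (fun x => Dv (1,0) u₂ (x, s)) := slice_contDiff (Dv.contDiff hu _) s
    have hφ : ContDiff ℝ ∞ (fun x => Dv (0,1) b₂ (x, s)) := slice_contDiff (Dv.contDiff hb _) s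
    have hψ : ContDiff ℝ ∞ (fun x => kappa * (b x s * Dv (1,0) u₂ (x, s))
        - u x s * Dv (1,0) b₂ (x, s)) := (contDiff_const.mul (hSb.mul hSU)).sub (hSu.mul hSB)
    have heq : EqOn (fun x => Dv (0,1) b₂ (x, s))
        (fun x => kappa * (b x s * Dv (1,0) u₂ (x, s)) - u x s * Dv (1,0) b₂ (x, s))
        (Icc 0 1) := by
      intro x hx
      have hp := hpde x hx s hs0 hsT
      have h1 : pdt b x s = Dv (0,1) b₂ (x, s) := (Dv.slice_t (Dv.diff hb) x s).deriv
      have h2 : pdx b x s = Dv (1,0) b₂ (x, s) := (Dv.slice_x (Dv.diff hb) x s).deriv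
      have h3 : pdx u x s = Dv (1,0) u₂ (x, s) := (Dv.slice_x (Dv.diff hu) x s).deriv
      show Dv (0,1) b₂ (x, s)
        = kappa * (b x s * Dv (1,0) u₂ (x, s)) - u x s * Dv (1,0) b₂ (x, s)
      rw [← h1, ← h2, ← h3]
      linarith [hp]
    have hits := my_eqOn_iteratedDeriv_Icc hφ hψ heq n hmem
    have e1 : Dv (0,1) ((Dv (1,0))^[n] b₂) (γ s, s)
        = iteratedDeriv n (fun x => Dv (0,1) b₂ (x, s)) (γ s) := by
      rw [Dt_iter_comm hb n]
      exact (iteratedDeriv_slice (Dv.contDiff hb _) n (γ s) s).symm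
    have e2 : iteratedDeriv n (fun x => kappa * (b x s * Dv (1,0) u₂ (x, s))
          - u x s * Dv (1,0) b₂ (x, s)) (γ s)
        = kappa * iteratedDeriv n (fun x => b x s * Dv (1,0) u₂ (x, s)) (γ s)
          - iteratedDeriv n (fun x => u x s * Dv (1,0) b₂ (x, s)) (γ s) := by
      rw [my_itd_sub (contDiff_const.mul (hSb.mul hSU)) (hSu.mul hSB) n (γ s),
        my_itd_const_mul (hSb.mul hSU) kappa n (γ s)]
    have e3 := my_iteratedDeriv_mul hSb hSU n (γ s)
    have e4 := my_iteratedDeriv_mul hSu hSB n (γ s)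
    have hsb : ∀ j, iteratedDeriv j (fun x => b x s) (γ s) = (Dv (1,0))^[j] b₂ (γ s, s) :=
      fun j => iteratedDeriv_slice hb j (γ s) s
    have hsB : ∀ j, iteratedDeriv j (fun x => Dv (1,0) b₂ (x, s)) (γ s)
        = (Dv (1,0))^[j+1] b₂ (γ s, s) := by
      intro j
      rw [Function.iterate_succ_apply]
      exact iteratedDeriv_slice (Dv.contDiff hb _) j (γ s) s
    have hsum1 : iteratedDeriv n (fun x => b x s * Dv (1,0) u₂ (x, s)) (γ s)
        = (Dv (1,0))^[n] b₂ (γ s, s) * Dv (1,0) u₂ (γ s, s) := by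
      rw [e3, Finset.sum_range_succ]
      have hz : ∑ j ∈ Finset.range n, (n.choose j : ℝ) *
          (iteratedDeriv j (fun x => b x s) (γ s)
            * iteratedDeriv (n-j) (fun x => Dv (1,0) u₂ (x, s)) (γ s)) = 0 := by
        apply Finset.sum_eq_zero
        intro j hj
        rw [hsb j, hzero j (Finset.mem_range.mp hj) s hs0 hsT]
        ring
      rw [hz, hsb n]
      simp [iteratedDeriv_zero]
    have hsum2 : iteratedDeriv n (fun x => u x s * Dv (1,0) b₂ (x, s)) (γ s)
        = u (γ s) s * (Dv (1,0))^[n+1] b₂ (γ s, s)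
          + (n:ℝ) * Dv (1,0) u₂ (γ s, s) * (Dv (1,0))^[n] b₂ (γ s, s) := by
      rw [e4]
      have hderSu : deriv (fun x => u x s) (γ s) = Dv (1,0) u₂ (γ s, s) :=
        (Dv.slice_x (Dv.diff hu) (γ s) s).deriv
      rcases n with _ | k
      · rw [show Finset.range (0+1) = {0} from rfl, Finset.sum_singleton]
        simp only [Nat.choose_self, Nat.cast_one, one_mul, Nat.sub_zero,
          iteratedDeriv_zero, hsB 0, Nat.cast_zero]
        push_cast
        ring
      · rw [Finset.sum_range_succ' _ (k+1), Finset.sum_range_succ' _ k]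
        have hz : ∑ j ∈ Finset.range k, ((k+1).choose (j+1+1) : ℝ) *
            (iteratedDeriv (j+1+1) (fun x => u x s) (γ s)
              * iteratedDeriv (k+1-(j+1+1)) (fun x => Dv (1,0) b₂ (x, s)) (γ s)) = 0 := by
          apply Finset.sum_eq_zero
          intro j hj
          have hjk := Finset.mem_range.mp hj
          rw [hsB (k+1-(j+1+1))]
          have hidx : k+1-(j+1+1)+1 = k - j := by omega
          rw [hidx, hzero (k-j) (by omega) s hs0 hsT]
          ring
        rw [hz]
        simp only [Nat.zero_add, Nat.add_sub_cancel, Nat.sub_zero, iteratedDeriv_zero,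
          iteratedDeriv_one, Nat.choose_one_right, Nat.choose_zero_right, hderSu,
          hsB k, hsB (k+1), Nat.cast_one, one_mul]
        push_cast
        ring
    rw [e1, hits, e2, hsum1, hsum2,
      ← Function.iterate_succ_apply' (Dv (1,0)) n b₂]
    push_cast
    ring
  -- solve the linear ODE on [0, t₀]
  have hsT' : ∀ s ∈ Icc (0:ℝ) t₀, (s : EReal) < T := fun s hs =>
    lt_of_le_of_lt (EReal.coe_le_coe_iff.mpr hs.2) ht₀T
  set proj : ℝ → ℝ := fun s => max 0 (min s t₀) with hprojdef
  have hproj_cont : Continuous proj := continuous_const.max (continuous_id.min continuous_const)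
  have hproj_mem : ∀ s, proj s ∈ Icc (0:ℝ) t₀ :=
    fun s => ⟨le_max_left _ _, max_le ht₀ (min_le_right _ _)⟩
  have hproj_id : ∀ s ∈ Icc (0:ℝ) t₀, proj s = s := by
    intro s hs
    simp only [hprojdef]
    rw [min_eq_left hs.2, max_eq_right hs.1]
  have hγcont : ContinuousOn γ (Icc 0 t₀) := fun s hs =>
    ((hγ.2 s hs.1 (hsT' s hs)).2.continuousAt).continuousWithinAt
  have hγc : Continuous (fun s => γ (proj s)) := hγcont.comp_continuous hproj_cont hproj_mem
  set pc : ℝ → ℝ := fun s => Dv (1,0) u₂ (γ (proj s), proj s) with hpcdef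
  have hpc : Continuous pc :=
    (Dv.contDiff hu (1,0)).continuous.comp (hγc.prodMk hproj_cont)
  have hpc_eq : ∀ s ∈ Icc (0:ℝ) t₀, pc s = Dv (1,0) u₂ (γ s, s) := by
    intro s hs
    simp only [hpcdef, hproj_id s hs]
  have hode := my_linear_ode (B := fun r => (Dv (1,0))^[n] b₂ (γ r, r))
    (c := kappa - (n:ℝ)) ht₀ hpc
    (fun s hs => by rw [hpc_eq s hs]; exact hBder s hs.1 (hsT' s hs))
  have hint : (∫ s in (0:ℝ)..t₀, pc s) = ∫ s in (0:ℝ)..t₀, pdx u (γ s) s := by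
    apply intervalIntegral.integral_congr
    intro s hs
    rw [uIcc_of_le ht₀] at hs
    rw [hpc_eq s hs]
    exact ((Dv.slice_x (Dv.diff hu) (γ s) s).deriv).symm
  have hode' : (Dv (1,0))^[n] b₂ (γ t₀, t₀)
      = (Dv (1,0))^[n] b₂ (γ 0, 0)
          * Real.exp ((kappa - (n:ℝ)) * ∫ s in (0:ℝ)..t₀, pc s) := hode
  rw [hode', hint, hγ.1, hinit n]

/-- order of a zero of `b₀` is preserved along Lagrangian trajectories, and the
`m`-th spatial derivative of `b` along the trajectory equals `b₀^(m)(α₀) · γ_α^{κ−m} ≠ 0`. -/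
theorem statement0 (lam kappa : ℝ) (T : EReal) (hT : 0 < T)
    (u b : ℝ → ℝ → ℝ)
    (hu : ContDiff ℝ (⊤ : ℕ∞) (fun p : ℝ × ℝ => u p.1 p.2))
    (hb : ContDiff ℝ (⊤ : ℕ∞) (fun p : ℝ × ℝ => b p.1 p.2))
    (hpde : ∀ x ∈ Icc (0:ℝ) 1, ∀ t : ℝ, 0 ≤ t → (t : EReal) < T →
      pdt b x t + u x t * pdx b x t = kappa * b x t * pdx u x t)
    (α₀ : ℝ) (hα₀ : α₀ ∈ Icc (0:ℝ) 1)
    (γ : ℝ → ℝ) (hγ : Traj T u α₀ γ)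
    (m : ℕ) (hm : 0 < m)
    (hord : ZeroOfOrder (fun x => b x 0) m α₀) :
    ∀ t : ℝ, 0 ≤ t → (t : EReal) < T →
      (∀ n < m, iteratedDeriv n (fun y => b y t) (γ t) = 0) ∧
      iteratedDeriv m (fun y => b y t) (γ t)
        = iteratedDeriv m (fun x => b x 0) α₀ * (Jac u γ t) ^ (kappa - (m : ℝ)) ∧
      iteratedDeriv m (fun y => b y t) (γ t) ≠ 0 := by
  have hu' : ContDiff ℝ ∞ (fun p : ℝ × ℝ => u p.1 p.2) := hu.of_le (by simp)
  have hb' : ContDiff ℝ ∞ (fun p : ℝ × ℝ => b p.1 p.2) := hb.of_le (by simp)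
  have hkey := keyL kappa T u b hu' hb' hpde α₀ γ hγ m hord.1
  intro t ht htT
  have hpow : ∀ n : ℕ, (Jac u γ t) ^ (kappa - (n:ℝ))
      = Real.exp ((kappa - (n:ℝ)) * ∫ s in (0:ℝ)..t, pdx u (γ s) s) := by
    intro n
    rw [Jac, Real.rpow_def_of_pos (Real.exp_pos _), Real.log_exp, mul_comm]
  have hslice : ∀ n : ℕ, iteratedDeriv n (fun y => b y t) (γ t)
      = (Dv (1,0))^[n] (fun p : ℝ × ℝ => b p.1 p.2) (γ t, t) :=
    fun n => iteratedDeriv_slice hb' n (γ t) t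
  refine ⟨?_, ?_, ?_⟩
  · intro n hn
    rw [hslice n, hkey n (le_of_lt hn) t ht htT, hord.1 n hn, zero_mul]
  · rw [hslice m, hkey m le_rfl t ht htT, hpow m]
  · rw [hslice m, hkey m le_rfl t ht htT]
    exact mul_ne_zero hord.2 (Real.exp_pos _).ne'
end
end

section
/- Let λ = −1/2 and κ ∈ ℝ, and let (u,b) be a smooth solution of the generalized system on [0,1]×[0,T) satisfying Dirichlet or periodic boundary conditions. Then the energy E(t) := ∫₀¹(∂ₓu(x,t))² dx + ∫₀¹(∂ₓb(x,t))² dx is conserved: for all t ∈ [0,T), E(t) = ∫₀¹(u₀'(x))² dx + ∫₀¹(b₀'(x))² dx. -/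
open Real Set Filter Topology MeasureTheory intervalIntegral

noncomputable section

variable {f : ℝ → ℝ → ℝ}

/-- smoothness hypothesis abbreviation -/
def Sm (f : ℝ → ℝ → ℝ) : Prop := ContDiff ℝ (⊤ : ℕ∞) (fun p : ℝ × ℝ => f p.1 p.2)

lemma pdx_eq_fderiv (hf : Sm f) (x t : ℝ) :
    pdx f x t = fderiv ℝ (fun p : ℝ × ℝ => f p.1 p.2) (x, t) (1, 0) := by
  have h1 : HasDerivAt (fun y : ℝ => (y, t)) ((1 : ℝ), (0 : ℝ)) x :=
    (hasDerivAt_id x).prodMk (hasDerivAt_const x t)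
  have h2 : HasDerivAt (fun y => f y t)
      (fderiv ℝ (fun p : ℝ × ℝ => f p.1 p.2) (x, t) (1, 0)) x :=
    HasFDerivAt.comp_hasDerivAt (l := fun p : ℝ × ℝ => f p.1 p.2) x
      ((hf.differentiable (by simp) (x, t)).hasFDerivAt) h1
  unfold pdx; exact h2.deriv

lemma hasDerivAt_pdx (hf : Sm f) (x t : ℝ) :
    HasDerivAt (fun y => f y t) (pdx f x t) x := by
  rw [pdx_eq_fderiv hf x t]
  exact ((hf.differentiable (by simp) (x, t)).hasFDerivAt).comp_hasDerivAt x
    ((hasDerivAt_id x).prodMk (hasDerivAt_const x t))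

lemma pdt_eq_fderiv (hf : Sm f) (x t : ℝ) :
    pdt f x t = fderiv ℝ (fun p : ℝ × ℝ => f p.1 p.2) (x, t) (0, 1) := by
  have h1 : HasDerivAt (fun s : ℝ => (x, s)) ((0 : ℝ), (1 : ℝ)) t :=
    (hasDerivAt_const t x).prodMk (hasDerivAt_id t)
  have h2 : HasDerivAt (fun s => f x s)
      (fderiv ℝ (fun p : ℝ × ℝ => f p.1 p.2) (x, t) (0, 1)) t :=
    ((hf.differentiable (by simp) (x, t)).hasFDerivAt).comp_hasDerivAt t h1
  unfold pdt; exact h2.deriv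

lemma hasDerivAt_pdt (hf : Sm f) (x t : ℝ) :
    HasDerivAt (fun s => f x s) (pdt f x t) t := by
  rw [pdt_eq_fderiv hf x t]
  exact ((hf.differentiable (by simp) (x, t)).hasFDerivAt).comp_hasDerivAt t
    ((hasDerivAt_const t x).prodMk (hasDerivAt_id t))

lemma smPdx (hf : Sm f) : Sm (fun x t => pdx f x t) := by
  have : (fun p : ℝ × ℝ => pdx f p.1 p.2)
      = fun p : ℝ × ℝ => fderiv ℝ (fun q : ℝ × ℝ => f q.1 q.2) p (1, 0) := by
    funext p; exact pdx_eq_fderiv hf p.1 p.2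
  unfold Sm
  rw [this]
  exact (hf.fderiv_right (by simp)).clm_apply contDiff_const

lemma smPdt (hf : Sm f) : Sm (fun x t => pdt f x t) := by
  have : (fun p : ℝ × ℝ => pdt f p.1 p.2)
      = fun p : ℝ × ℝ => fderiv ℝ (fun q : ℝ × ℝ => f q.1 q.2) p (0, 1) := by
    funext p; exact pdt_eq_fderiv hf p.1 p.2
  unfold Sm
  rw [this]
  exact (hf.fderiv_right (by simp)).clm_apply contDiff_const

lemma pdtx_eq_pdt_pdx : pdtx f x t = pdt (fun a s => pdx f a s) x t := rfl

lemma pdxx_eq_pdx_pdx : pdxx f x t = pdx (fun a s => pdx f a s) x t := by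
  unfold pdxx pdx
  rw [iteratedDeriv_succ, iteratedDeriv_one]

lemma clairaut (hf : Sm f) (x t : ℝ) :
    pdt (fun a s => pdx f a s) x t = pdx (fun a s => pdt f a s) x t := by
  set F : ℝ × ℝ → ℝ := fun p => f p.1 p.2 with hF
  have hdF : Differentiable ℝ F := hf.differentiable (by simp)
  have hdF' : Differentiable ℝ (fderiv ℝ F) :=
    (hf.fderiv_right (m := 1) (WithTop.coe_le_coe.2 le_top)).differentiable (by simp)
  have e1 : pdt (fun a s => pdx f a s) x t
      = fderiv ℝ (fun p : ℝ × ℝ => fderiv ℝ F p ((1:ℝ), (0:ℝ))) (x, t) (0, 1) := by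
    have h := pdt_eq_fderiv (f := fun a s => pdx f a s) (smPdx hf) x t
    have hfun : (fun p : ℝ × ℝ => pdx f p.1 p.2)
        = fun p : ℝ × ℝ => fderiv ℝ F p ((1:ℝ), (0:ℝ)) :=
      funext fun p => pdx_eq_fderiv hf p.1 p.2
    rw [hfun] at h
    exact h
  have e2 : pdx (fun a s => pdt f a s) x t
      = fderiv ℝ (fun p : ℝ × ℝ => fderiv ℝ F p ((0:ℝ), (1:ℝ))) (x, t) (1, 0) := by
    have h := pdx_eq_fderiv (f := fun a s => pdt f a s) (smPdt hf) x t
    have hfun : (fun p : ℝ × ℝ => pdt f p.1 p.2)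
        = fun p : ℝ × ℝ => fderiv ℝ F p ((0:ℝ), (1:ℝ)) :=
      funext fun p => pdt_eq_fderiv hf p.1 p.2
    rw [hfun] at h
    exact h
  have key : ∀ v w : ℝ × ℝ,
      fderiv ℝ (fun p : ℝ × ℝ => fderiv ℝ F p v) (x, t) w
        = fderiv ℝ (fderiv ℝ F) (x, t) w v := by
    intro v w
    have h := fderiv_clm_apply (c := fderiv ℝ F) (u := fun _ => v)
      (hdF' (x, t)) (differentiableAt_const v)
    rw [h]
    simp
  rw [e1, e2, key, key]
  exact second_derivative_symmetric (fun y => (hdF y).hasFDerivAt)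
    (hdF' (x, t)).hasFDerivAt (0, 1) (1, 0)

lemma smCont (hf : Sm f) (t : ℝ) : Continuous (fun x => f x t) :=
  hf.continuous.comp (continuous_id.prodMk continuous_const)

lemma contG' {u b : ℝ → ℝ → ℝ} (hu : Sm u) (hb : Sm b) :
    Continuous (fun p : ℝ × ℝ =>
      2 * pdx u p.1 p.2 * pdtx u p.1 p.2 + 2 * pdx b p.1 p.2 * pdtx b p.1 p.2) := by
  have h1 : Continuous (fun p : ℝ × ℝ => pdx u p.1 p.2) := (smPdx hu).continuous
  have h2 : Continuous (fun p : ℝ × ℝ => pdtx u p.1 p.2) :=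
    (smPdt (smPdx hu)).continuous
  have h3 : Continuous (fun p : ℝ × ℝ => pdx b p.1 p.2) := (smPdx hb).continuous
  have h4 : Continuous (fun p : ℝ × ℝ => pdtx b p.1 p.2) :=
    (smPdt (smPdx hb)).continuous
  exact ((continuous_const.mul h1).mul h2).add ((continuous_const.mul h3).mul h4)

lemma hasDerivAt_E {u b : ℝ → ℝ → ℝ} (hu : Sm u) (hb : Sm b) (s₀ : ℝ) :
    HasDerivAt (fun τ => ∫ x in (0:ℝ)..1, ((pdx u x τ) ^ 2 + (pdx b x τ) ^ 2))
      (∫ x in (0:ℝ)..1,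
        (2 * pdx u x s₀ * pdtx u x s₀ + 2 * pdx b x s₀ * pdtx b x s₀)) s₀ := by
  have hg' := contG' hu hb
  -- bound on compact set
  obtain ⟨C, hC⟩ := (((isCompact_Icc (a := (0:ℝ)) (b := 1)).prod
      (isCompact_Icc (a := s₀ - 1) (b := s₀ + 1)))).exists_bound_of_continuousOn
    hg'.continuousOn
  have key := intervalIntegral.hasDerivAt_integral_of_dominated_loc_of_deriv_le
    (F := fun τ x => (pdx u x τ) ^ 2 + (pdx b x τ) ^ 2)
    (F' := fun τ x => 2 * pdx u x τ * pdtx u x τ + 2 * pdx b x τ * pdtx b x τ)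
    (x₀ := s₀) (a := 0) (b := 1) (μ := volume) (bound := fun _ => C)
    (s := Metric.ball s₀ 1) (Metric.ball_mem_nhds s₀ one_pos)
    ?_ ?_ ?_ ?_ ?_ ?_
  · exact key.2
  · refine Filter.Eventually.of_forall fun τ => ?_
    exact (((smCont (smPdx hu) τ).pow 2).add
      ((smCont (smPdx hb) τ).pow 2)).aestronglyMeasurable
  · exact (((smCont (smPdx hu) s₀).pow 2).add
      ((smCont (smPdx hb) s₀).pow 2)).intervalIntegrable 0 1
  · exact (hg'.comp (continuous_id.prodMk continuous_const)).aestronglyMeasurable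
  · refine ae_of_all _ fun x hx τ hτ => ?_
    have hx' : x ∈ Icc (0:ℝ) 1 := by
      rw [uIoc_of_le zero_le_one] at hx; exact Ioc_subset_Icc_self hx
    have hτ' : τ ∈ Icc (s₀ - 1) (s₀ + 1) := by
      rw [Metric.mem_ball, Real.dist_eq] at hτ
      constructor <;> [linarith [neg_abs_le (τ - s₀)]; linarith [le_abs_self (τ - s₀)]]
    exact hC (x, τ) ⟨hx', hτ'⟩
  · exact intervalIntegrable_const
  · refine ae_of_all _ fun x _ τ _ => ?_
    have h1 : HasDerivAt (fun τ' => pdx u x τ') (pdtx u x τ) τ :=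
      hasDerivAt_pdt (smPdx hu) x τ
    have h2 : HasDerivAt (fun τ' => pdx b x τ') (pdtx b x τ) τ :=
      hasDerivAt_pdt (smPdx hb) x τ
    have := (h1.pow 2).add (h2.pow 2)
    refine this.congr_deriv ?_
    push_cast
    ring

lemma pdtx_b_eq (kappa : ℝ) {u b : ℝ → ℝ → ℝ} (hu : Sm u) (hb : Sm b)
    {s : ℝ}
    (hpde2 : ∀ x ∈ Icc (0:ℝ) 1, pdt b x s + u x s * pdx b x s = kappa * b x s * pdx u x s) :
    ∀ x ∈ Icc (0:ℝ) 1,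
      pdtx b x s = kappa * pdx b x s * pdx u x s + kappa * b x s * pdxx u x s
        - pdx u x s * pdx b x s - u x s * pdxx b x s := by
  intro x hx
  set R : ℝ → ℝ := fun y => kappa * b y s * pdx u y s - u y s * pdx b y s with hR
  have hDR : ∀ y : ℝ, HasDerivAt R
      (kappa * pdx b y s * pdx u y s + kappa * b y s * pdxx u y s
        - pdx u y s * pdx b y s - u y s * pdxx b y s) y := by
    intro y
    have hB := hasDerivAt_pdx hb y s
    have hU := hasDerivAt_pdx hu y s
    have hUx : HasDerivAt (fun z => pdx u z s) (pdxx u y s) y := by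
      rw [pdxx_eq_pdx_pdx]; exact hasDerivAt_pdx (smPdx hu) y s
    have hBx : HasDerivAt (fun z => pdx b z s) (pdxx b y s) y := by
      rw [pdxx_eq_pdx_pdx]; exact hasDerivAt_pdx (smPdx hb) y s
    have h := ((hB.const_mul kappa).mul hUx).sub (hU.mul hBx)
    refine h.congr_deriv ?_
    ring
  have hderivR : deriv R = fun y =>
      kappa * pdx b y s * pdx u y s + kappa * b y s * pdxx u y s
        - pdx u y s * pdx b y s - u y s * pdxx b y s := funext fun y => (hDR y).deriv
  have hL : pdtx b x s = deriv (fun y => pdt b y s) x := by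
    rw [pdtx_eq_pdt_pdx, clairaut hb]; rfl
  have hcontL : Continuous (deriv (fun y => pdt b y s)) := by
    have h : deriv (fun y => pdt b y s) = fun y => pdx (fun a τ => pdt b a τ) y s := rfl
    rw [h]
    exact smCont (smPdx (smPdt hb)) s
  have cxx_u : Continuous (fun y => pdxx u y s) := by
    have h : (fun y => pdxx u y s) = fun y => pdx (fun a τ => pdx u a τ) y s :=
      funext fun y => pdxx_eq_pdx_pdx
    rw [h]; exact smCont (smPdx (smPdx hu)) s
  have cxx_b : Continuous (fun y => pdxx b y s) := by
    have h : (fun y => pdxx b y s) = fun y => pdx (fun a τ => pdx b a τ) y s :=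
      funext fun y => pdxx_eq_pdx_pdx
    rw [h]; exact smCont (smPdx (smPdx hb)) s
  have hcontR : Continuous (deriv R) := by
    rw [hderivR]
    exact ((((continuous_const.mul (smCont (smPdx hb) s)).mul (smCont (smPdx hu) s)).add
        ((continuous_const.mul (smCont hb s)).mul cxx_u)).sub
      ((smCont (smPdx hu) s).mul (smCont (smPdx hb) s))).sub ((smCont hu s).mul cxx_b)
  have hIoo : ∀ y ∈ Ioo (0:ℝ) 1, deriv (fun z => pdt b z s) y = deriv R y := by
    intro y hy
    apply Filter.EventuallyEq.deriv_eq
    filter_upwards [Ioo_mem_nhds hy.1 hy.2] with z hz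
    have h := hpde2 z (Ioo_subset_Icc_self hz)
    show pdt b z s = kappa * b z s * pdx u z s - u z s * pdx b z s
    linarith
  have hIcc : Icc (0:ℝ) 1 ⊆ {y | deriv (fun z => pdt b z s) y = deriv R y} := by
    rw [← closure_Ioo (zero_ne_one)]
    exact closure_minimal hIoo (isClosed_eq hcontL hcontR)
  have hx2 := hIcc hx
  rw [hL, hx2, hderivR]

lemma deriv_zero_E (kappa : ℝ) (T : EReal) (u b : ℝ → ℝ → ℝ)
    (hsys : GSys (-(1/2)) kappa T u b)
    (hbc : DirichletBC T u b ∨ PeriodicBC T u b)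
    (s : ℝ) (hs0 : 0 ≤ s) (hsT : (s : EReal) < T) :
    (∫ x in (0:ℝ)..1,
      (2 * pdx u x s * pdtx u x s + 2 * pdx b x s * pdtx b x s)) = 0 := by
  obtain ⟨hu0, hb0, hpde⟩ := hsys
  have hu : Sm u := hu0
  have hb : Sm b := hb0
  set I : ℝ := Iterm (-(1/2)) kappa u b s with hIdef
  have hpu : ∀ x ∈ Icc (0:ℝ) 1, pdtx u x s
      = -(1/2) * (pdx u x s) ^ 2 + (1/2) * (pdx b x s) ^ 2 + kappa * b x s * pdxx b x s + I
        - u x s * pdxx u x s := by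
    intro x hx
    have h := (hpde x hx s hs0 hsT).1
    linarith
  have hpb := pdtx_b_eq kappa hu hb (fun x hx => (hpde x hx s hs0 hsT).2)
  set G : ℝ → ℝ := fun y => -(u y s * (pdx u y s) ^ 2) - u y s * (pdx b y s) ^ 2
      + 2 * kappa * b y s * pdx u y s * pdx b y s + 2 * I * u y s with hGdef
  have hGd : ∀ x ∈ Icc (0:ℝ) 1,
      HasDerivAt G (2 * pdx u x s * pdtx u x s + 2 * pdx b x s * pdtx b x s) x := by
    intro x hx
    have hU := hasDerivAt_pdx hu x s
    have hB := hasDerivAt_pdx hb x s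
    have hUx : HasDerivAt (fun z => pdx u z s) (pdxx u x s) x := by
      rw [pdxx_eq_pdx_pdx]; exact hasDerivAt_pdx (smPdx hu) x s
    have hBx : HasDerivAt (fun z => pdx b z s) (pdxx b x s) x := by
      rw [pdxx_eq_pdx_pdx]; exact hasDerivAt_pdx (smPdx hb) x s
    have h1 := hU.mul (hUx.pow 2)
    have h2 := hU.mul (hBx.pow 2)
    have h3 := ((hB.const_mul (2 * kappa)).mul hUx).mul hBx
    have h4 := hU.const_mul (2 * I)
    have hD := ((h1.neg.sub h2).add h3).add h4
    refine hD.congr_deriv ?_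
    rw [hpu x hx, hpb x hx]
    push_cast
    simp only [Pi.pow_apply, Pi.mul_apply]
    ring
  have hint : IntervalIntegrable
      (fun x => 2 * pdx u x s * pdtx u x s + 2 * pdx b x s * pdtx b x s) volume 0 1 :=
    ((contG' hu hb).comp (continuous_id.prodMk continuous_const)).intervalIntegrable 0 1
  have hftc := intervalIntegral.integral_eq_sub_of_hasDerivAt
    (f := G) (fun x hx => hGd x (by rwa [uIcc_of_le zero_le_one] at hx)) hint
  rw [hftc]
  rcases hbc with hd | hp
  · obtain ⟨e0, e1, e2, e3⟩ := hd s hs0 hsT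
    simp only [hGdef]
    rw [e0, e1, e2, e3]
    ring
  · obtain ⟨e0, e1, e2, e3⟩ := hp s hs0 hsT
    simp only [hGdef]
    rw [e0, e1, e2, e3]
    ring

/-- for `λ = −1/2` the energy `E(t) = ‖uₓ‖₂² + ‖bₓ‖₂²` is conserved. -/
theorem statement2 (kappa : ℝ) (T : EReal) (hT : 0 < T)
    (u b : ℝ → ℝ → ℝ)
    (hsys : GSys (-(1/2)) kappa T u b)
    (hbc : DirichletBC T u b ∨ PeriodicBC T u b) :
    ∀ t : ℝ, 0 ≤ t → (t : EReal) < T →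
      (∫ x in (0:ℝ)..1, (pdx u x t) ^ 2) + (∫ x in (0:ℝ)..1, (pdx b x t) ^ 2)
        = (∫ x in (0:ℝ)..1, (pdx u x 0) ^ 2) + (∫ x in (0:ℝ)..1, (pdx b x 0) ^ 2) := by
  intro t ht0 htT
  have hu : Sm u := hsys.1
  have hb : Sm b := hsys.2.1
  have hconst : ∀ x ∈ Icc (0:ℝ) t,
      (fun τ => ∫ x in (0:ℝ)..1, ((pdx u x τ) ^ 2 + (pdx b x τ) ^ 2)) x
        = (fun τ => ∫ x in (0:ℝ)..1, ((pdx u x τ) ^ 2 + (pdx b x τ) ^ 2)) 0 := by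
    apply constant_of_has_deriv_right_zero
    · intro s _
      exact (hasDerivAt_E hu hb s).continuousAt.continuousWithinAt
    · intro s hs
      have hsT : (s : EReal) < T :=
        lt_of_le_of_lt (EReal.coe_le_coe_iff.2 hs.2.le) htT
      have h := hasDerivAt_E hu hb s
      rw [deriv_zero_E kappa T u b hsys hbc s hs.1 hsT] at h
      exact h.hasDerivWithinAt
  have hE := hconst t (right_mem_Icc.2 ht0)
  simp only at hE
  have hsplit : ∀ τ : ℝ,
      (∫ x in (0:ℝ)..1, ((pdx u x τ) ^ 2 + (pdx b x τ) ^ 2))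
        = (∫ x in (0:ℝ)..1, (pdx u x τ) ^ 2) + (∫ x in (0:ℝ)..1, (pdx b x τ) ^ 2) :=
    fun τ => intervalIntegral.integral_add
      (((smCont (smPdx hu) τ).pow 2).intervalIntegrable 0 1)
      (((smCont (smPdx hb) τ).pow 2).intervalIntegrable 0 1)
  rw [← hsplit t, ← hsplit 0]
  exact hE
end
end

section
/- Let λ ≤ −1 and κ ≥ −λ. Let (u,b) be a smooth solution of the generalized system on [0,1]×[0,T) satisfying Dirichlet or periodic boundary conditions, with a Lagrangian trajectory γ(α₀,·) starting at α₀ ∈ [0,1]. Suppose b₀(α₀) = 0 and u₀'(α₀) > 0. Then for all t ∈ [0,T): γ_α(α₀,t)^{−λ} ≥ 1 − λ·u₀'(α₀)·t ≥ 1. In particular, the Jacobian γ_α(α₀,t) stays bounded away from zero: γ_α(α₀,t) ≥ 1 for all t ∈ [0,T). -/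
open Real Set Filter Topology MeasureTheory intervalIntegral

noncomputable section

lemma hasDerivAt_fst' {V : ℝ × ℝ → ℝ} (hV : ContDiff ℝ (⊤ : ℕ∞) V) (x t : ℝ) :
    HasDerivAt (fun y => V (y, t)) (fderiv ℝ V (x, t) (1, 0)) x := by
  have h1 : HasFDerivAt V (fderiv ℝ V (x, t)) (x, t) :=
    (hV.differentiable (by simp) (x, t)).hasFDerivAt
  have h2 : HasDerivAt (fun y : ℝ => (y, t)) ((1 : ℝ), (0 : ℝ)) x :=
    (hasDerivAt_id x).prodMk (hasDerivAt_const x t)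
  exact h1.comp_hasDerivAt x h2

lemma hasDerivAt_snd' {V : ℝ × ℝ → ℝ} (hV : ContDiff ℝ (⊤ : ℕ∞) V) (x t : ℝ) :
    HasDerivAt (fun s => V (x, s)) (fderiv ℝ V (x, t) (0, 1)) t := by
  have h1 : HasFDerivAt V (fderiv ℝ V (x, t)) (x, t) :=
    (hV.differentiable (by simp) (x, t)).hasFDerivAt
  have h2 : HasDerivAt (fun s : ℝ => (x, s)) ((0 : ℝ), (1 : ℝ)) t :=
    (hasDerivAt_const t x).prodMk (hasDerivAt_id t)
  exact h1.comp_hasDerivAt t h2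

lemma hasDerivAt_traj' {V : ℝ × ℝ → ℝ} (hV : ContDiff ℝ (⊤ : ℕ∞) V) {γ : ℝ → ℝ} {a s : ℝ}
    (hγ : HasDerivAt γ a s) :
    HasDerivAt (fun τ => V (γ τ, τ))
      (a * fderiv ℝ V (γ s, s) (1, 0) + fderiv ℝ V (γ s, s) (0, 1)) s := by
  have h1 : HasFDerivAt V (fderiv ℝ V (γ s, s)) (γ s, s) :=
    (hV.differentiable (by simp) (γ s, s)).hasFDerivAt
  have h2 : HasDerivAt (fun τ : ℝ => (γ τ, τ)) (a, (1 : ℝ)) s :=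
    hγ.prodMk (hasDerivAt_id s)
  have h3 := h1.comp_hasDerivAt (f := fun τ : ℝ => (γ τ, τ)) s h2
  have : fderiv ℝ V (γ s, s) (a, 1)
      = a * fderiv ℝ V (γ s, s) (1, 0) + fderiv ℝ V (γ s, s) (0, 1) := by
    have : (a, (1:ℝ)) = a • ((1:ℝ), (0:ℝ)) + ((0:ℝ), (1:ℝ)) := by
      simp [Prod.ext_iff]
    rw [this, map_add, _root_.map_smul]
    simp [smul_eq_mul]
  rwa [this] at h3

lemma contDiff_pfderiv {V : ℝ × ℝ → ℝ} (hV : ContDiff ℝ (⊤ : ℕ∞) V) (w : ℝ × ℝ) :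
    ContDiff ℝ (⊤ : ℕ∞) (fun p => fderiv ℝ V p w) :=
  (hV.fderiv_right (by simp)).clm_apply contDiff_const


lemma pdx_eq {u : ℝ → ℝ → ℝ} (hu : ContDiff ℝ (⊤ : ℕ∞) (fun p : ℝ × ℝ => u p.1 p.2)) (x t : ℝ) :
    pdx u x t = fderiv ℝ (fun p : ℝ × ℝ => u p.1 p.2) (x, t) (1, 0) :=
  (hasDerivAt_fst' hu x t).deriv

lemma pdt_eq {u : ℝ → ℝ → ℝ} (hu : ContDiff ℝ (⊤ : ℕ∞) (fun p : ℝ × ℝ => u p.1 p.2)) (x t : ℝ) :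
    pdt u x t = fderiv ℝ (fun p : ℝ × ℝ => u p.1 p.2) (x, t) (0, 1) :=
  (hasDerivAt_snd' hu x t).deriv

lemma pdxx_eq {u : ℝ → ℝ → ℝ} (hu : ContDiff ℝ (⊤ : ℕ∞) (fun p : ℝ × ℝ => u p.1 p.2)) (x t : ℝ) :
    pdxx u x t
      = fderiv ℝ (fun p : ℝ × ℝ => fderiv ℝ (fun q : ℝ × ℝ => u q.1 q.2) p (1, 0)) (x, t)
          (1, 0) := by
  have hd : (deriv fun y => u y t) = fun y => fderiv ℝ (fun q : ℝ × ℝ => u q.1 q.2) (y, t) (1, 0) :=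
    funext fun y => (hasDerivAt_fst' hu y t).deriv
  show iteratedDeriv 2 (fun y => u y t) x = _
  rw [show (2:ℕ) = 1 + 1 from rfl, iteratedDeriv_succ, iteratedDeriv_one, hd]
  exact (hasDerivAt_fst' (contDiff_pfderiv hu (1, 0)) x t).deriv

lemma pdtx_eq {u : ℝ → ℝ → ℝ} (hu : ContDiff ℝ (⊤ : ℕ∞) (fun p : ℝ × ℝ => u p.1 p.2)) (x t : ℝ) :
    pdtx u x t
      = fderiv ℝ (fun p : ℝ × ℝ => fderiv ℝ (fun q : ℝ × ℝ => u q.1 q.2) p (1, 0)) (x, t)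
          (0, 1) := by
  have hd : (fun s => pdx u x s)
      = fun s => fderiv ℝ (fun q : ℝ × ℝ => u q.1 q.2) (x, s) (1, 0) :=
    funext fun s => pdx_eq hu x s
  show deriv (fun s => pdx u x s) t = _
  rw [hd]
  exact (hasDerivAt_snd' (contDiff_pfderiv hu (1, 0)) x t).deriv

/-- for `λ ≤ −1`, `κ ≥ −λ`, if `b₀(α₀) = 0` and `u₀'(α₀) > 0`, then the Jacobian
along the trajectory satisfies `γ_α^{−λ} ≥ 1 − λ u₀'(α₀) t ≥ 1`; in particular `γ_α ≥ 1`. -/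
theorem statement5 (lam kappa : ℝ) (hlam : lam ≤ -1) (hk : -lam ≤ kappa)
    (T : EReal) (hT : 0 < T)
    (u b : ℝ → ℝ → ℝ)
    (hsys : GSys lam kappa T u b)
    (hbc : DirichletBC T u b ∨ PeriodicBC T u b)
    (α₀ : ℝ) (hα₀ : α₀ ∈ Icc (0:ℝ) 1)
    (γ : ℝ → ℝ) (hγ : Traj T u α₀ γ)
    (hb₀ : b α₀ 0 = 0) (hu₀' : 0 < pdx u α₀ 0) :
    ∀ t : ℝ, 0 ≤ t → (t : EReal) < T →
      1 - lam * pdx u α₀ 0 * t ≤ (Jac u γ t) ^ (-lam) ∧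
      (1 : ℝ) ≤ 1 - lam * pdx u α₀ 0 * t ∧
      (1 : ℝ) ≤ Jac u γ t := by
  clear hbc
  obtain ⟨hu, hb, hpde⟩ := hsys
  obtain ⟨hγ0, hγT⟩ := hγ
  set f0 : ℝ := pdx u α₀ 0 with hf0def
  intro t₀ ht₀ ht₀T
  -- admissible times
  have hadm : ∀ s ∈ Icc (0:ℝ) t₀, (s : EReal) < T := fun s hs =>
    lt_of_le_of_lt (EReal.coe_le_coe_iff.2 hs.2) ht₀T
  have hγs : ∀ s ∈ Icc (0:ℝ) t₀, γ s ∈ Icc (0:ℝ) 1 ∧ HasDerivAt γ (u (γ s) s) s :=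
    fun s hs => hγT s hs.1 (hadm s hs)
  set Fx : ℝ × ℝ → ℝ := fun p => fderiv ℝ (fun q : ℝ × ℝ => u q.1 q.2) p (1, 0) with hFxdef
  have hFxc : Continuous Fx := (contDiff_pfderiv hu (1, 0)).continuous
  set f : ℝ → ℝ := fun s => Fx (γ s, s) with hfdef
  have hfeq : ∀ s, pdx u (γ s) s = f s := fun s => pdx_eq hu _ _
  have hf00 : f 0 = f0 := by rw [hf0def, ← hγ0, hfeq]
  -- continuity of f at admissible times
  have hfca : ∀ s ∈ Icc (0:ℝ) t₀, ContinuousAt f s := fun s hs =>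
    hFxc.continuousAt.comp
      (((hγs s hs).2.differentiableAt.continuousAt).prodMk continuousAt_id)
  have hfcont : ContinuousOn f (Icc 0 t₀) := fun s hs => (hfca s hs).continuousWithinAt
  -- derivative of f along trajectory, with PDE lower bound
  set D : ℝ → ℝ := fun s => pdtx u (γ s) s + u (γ s) s * pdxx u (γ s) s with hDdef
  have hfd : ∀ s ∈ Icc (0:ℝ) t₀, HasDerivAt f (D s) s := by
    intro s hs
    have h := hasDerivAt_traj' (contDiff_pfderiv hu (1, 0)) (hγs s hs).2
    show HasDerivAt f (pdtx u (γ s) s + u (γ s) s * pdxx u (γ s) s) s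
    rw [pdtx_eq hu, pdxx_eq hu, add_comm]
    exact h
  -- b vanishes along the trajectory (Grönwall)
  set B : ℝ → ℝ := fun s => b (γ s) s with hBdef
  have hBd : ∀ s ∈ Icc (0:ℝ) t₀, HasDerivAt B (kappa * B s * f s) s := by
    intro s hs
    have h := hasDerivAt_traj' hb (hγs s hs).2
    have hpde2 := (hpde (γ s) (hγs s hs).1 s hs.1 (hadm s hs)).2
    rw [← pdx_eq hb, ← pdt_eq hb] at h
    have : u (γ s) s * pdx b (γ s) s + pdt b (γ s) s = kappa * B s * f s := by
      rw [hBdef, ← hfeq]; linarith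
    rwa [this] at h
  have hB0 : ∀ s ∈ Icc (0:ℝ) t₀, B s = 0 := by
    obtain ⟨C, hC⟩ := isCompact_Icc.exists_bound_of_continuousOn hfcont
    have key := norm_le_gronwallBound_of_norm_deriv_right_le (f := B)
      (f' := fun s => kappa * B s * f s) (δ := 0) (K := |kappa| * C) (ε := 0) (a := 0) (b := t₀)
      (fun s hs => ((hBd s hs).continuousAt).continuousWithinAt)
      (fun s hs => ((hBd s (Ico_subset_Icc_self hs)).hasDerivWithinAt))
      (by show ‖B 0‖ ≤ 0
          have : B 0 = 0 := by show b (γ 0) 0 = 0; rw [hγ0]; exact hb₀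
          simp [this])
      (by
        intro s hs
        have hs' := Ico_subset_Icc_self hs
        have h1 : ‖f s‖ ≤ C := hC s hs'
        have h0 : (0:ℝ) ≤ ‖f s‖ := norm_nonneg _
        have : ‖kappa * B s * f s‖ = |kappa| * ‖B s‖ * ‖f s‖ := by
          simp only [Real.norm_eq_abs, abs_mul]
        rw [this]
        have : |kappa| * ‖B s‖ * ‖f s‖ ≤ |kappa| * ‖B s‖ * C := by
          apply mul_le_mul_of_nonneg_left h1 (by positivity)
        calc |kappa| * ‖B s‖ * ‖f s‖ ≤ |kappa| * ‖B s‖ * C := this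
          _ = |kappa| * C * ‖B s‖ + 0 := by ring)
    intro s hs
    have h := key s hs
    rw [gronwallBound_ε0_δ0] at h
    exact norm_le_zero_iff.mp h
  -- lower bound on D
  have hDge : ∀ s ∈ Icc (0:ℝ) t₀, lam * (f s) ^ 2 ≤ D s := by
    intro s hs
    have hpde1 := (hpde (γ s) (hγs s hs).1 s hs.1 (hadm s hs)).1
    have hI : 0 ≤ Iterm lam kappa u b s := by
      have h1 : 0 ≤ ∫ y in (0:ℝ)..1, (pdx b y s) ^ 2 :=
        intervalIntegral.integral_nonneg (by norm_num) (fun y _ => sq_nonneg _)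
      have h2 : 0 ≤ ∫ y in (0:ℝ)..1, (pdx u y s) ^ 2 :=
        intervalIntegral.integral_nonneg (by norm_num) (fun y _ => sq_nonneg _)
      unfold Iterm
      nlinarith [mul_nonneg (by linarith : (0:ℝ) ≤ lam + kappa) h1,
        mul_nonpos_of_nonpos_of_nonneg (by linarith : lam + 1 ≤ 0) h2]
    have hb0 : b (γ s) s = 0 := hB0 s hs
    have hsq : 0 ≤ (pdx b (γ s) s) ^ 2 := sq_nonneg _
    show lam * f s ^ 2 ≤ pdtx u (γ s) s + u (γ s) s * pdxx u (γ s) s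
    rw [hpde1, hfeq s, hb0]
    nlinarith
  -- clamp and continuous extension of f
  set c : ℝ → ℝ := fun s => min (max s 0) t₀ with hcdef
  have hcc : Continuous c := (continuous_id.max continuous_const).min continuous_const
  have hcmem : ∀ s, c s ∈ Icc (0:ℝ) t₀ := fun s =>
    ⟨le_min (le_max_right _ _) ht₀, min_le_right _ _⟩
  have hcid : ∀ s ∈ Icc (0:ℝ) t₀, c s = s := fun s hs => by
    rw [hcdef]; simp only []; rw [max_eq_left hs.1, min_eq_left hs.2]
  set fc : ℝ → ℝ := fun s => f (c s) with hfcdef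
  have hfcc : Continuous fc := by
    rw [continuous_iff_continuousAt]
    exact fun s => (hfca (c s) (hcmem s)).comp hcc.continuousAt
  have hfcicc : ∀ s ∈ Icc (0:ℝ) t₀, fc s = f s := fun s hs => by
    rw [hfcdef]; simp only []; rw [hcid s hs]
  -- the integral and Φ
  set A : ℝ → ℝ := fun τ => ∫ s in (0:ℝ)..τ, fc s with hAdef
  have hAd : ∀ τ, HasDerivAt A (fc τ) τ := fun τ =>
    intervalIntegral.integral_hasDerivAt_right (hfcc.intervalIntegrable 0 τ)
      ⟨univ, univ_mem, hfcc.aestronglyMeasurable.restrict⟩ hfcc.continuousAt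
  set Φ : ℝ → ℝ := fun τ => Real.exp (-lam * A τ) with hΦdef
  have hΦpos : ∀ τ, 0 < Φ τ := fun τ => Real.exp_pos _
  have hΦd : ∀ τ, HasDerivAt Φ (-lam * fc τ * Φ τ) τ := by
    intro τ
    have := ((hAd τ).const_mul (-lam)).exp
    convert this using 1
    ring
  set Φ' : ℝ → ℝ := fun τ => -lam * fc τ * Φ τ with hΦ'def
  have hΦcont : Continuous Φ := continuous_iff_continuousAt.2 fun τ => (hΦd τ).continuousAt
  have hΦ'cont : Continuous Φ' := ((continuous_const.mul hfcc).mul hΦcont)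
  -- Φ' has nonneg derivative on the interior
  have hΦ'd : ∀ s ∈ Ioo (0:ℝ) t₀, HasDerivAt Φ' (-lam * D s * Φ s + -lam * fc s * (Φ' s)) s := by
    intro s hs
    have hmem : Icc (0:ℝ) t₀ ∈ 𝓝 s := Icc_mem_nhds hs.1 hs.2
    have hfc' : HasDerivAt fc (D s) s := by
      apply (hfd s (Ioo_subset_Icc_self hs)).congr_of_eventuallyEq
      filter_upwards [hmem] with x hx using hfcicc x hx
    have h1 : HasDerivAt (fun τ => -lam * fc τ) (-lam * D s) s := hfc'.const_mul (-lam)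
    have := h1.mul (hΦd s)
    exact this
  have hΦ'mono : MonotoneOn Φ' (Icc 0 t₀) := by
    apply monotoneOn_of_deriv_nonneg (convex_Icc 0 t₀) hΦ'cont.continuousOn
    · intro s hs
      rw [interior_Icc] at hs
      exact (hΦ'd s hs).differentiableAt.differentiableWithinAt
    · intro s hs
      rw [interior_Icc] at hs
      rw [(hΦ'd s hs).deriv]
      have hfcs : fc s = f s := hfcicc s (Ioo_subset_Icc_self hs)
      have hD := hDge s (Ioo_subset_Icc_self hs)
      have hP := hΦpos s
      have hΦ's : Φ' s = -lam * f s * Φ s := by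
        show -lam * fc s * Φ s = -lam * f s * Φ s; rw [hfcs]
      rw [hΦ's, hfcs]
      have hkey2 : (-lam * (lam * f s ^ 2)) * Φ s ≤ (-lam * D s) * Φ s :=
        mul_le_mul_of_nonneg_right
          (mul_le_mul_of_nonneg_left hD (by linarith : (0:ℝ) ≤ -lam)) hP.le
      nlinarith [hkey2]
  -- value of Φ' at 0
  have hA0 : A 0 = 0 := intervalIntegral.integral_same
  have hΦ0 : Φ 0 = 1 := by rw [hΦdef]; simp [hA0]
  have hfc0 : fc 0 = f0 := by
    rw [← hf00]; exact hfcicc 0 ⟨le_refl _, ht₀⟩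
  have hΦ'0 : Φ' 0 = -lam * f0 := by rw [hΦ'def]; simp only []; rw [hfc0, hΦ0, mul_one]
  -- ψ monotone
  set ψ : ℝ → ℝ := fun τ => Φ τ + lam * f0 * τ with hψdef
  have hψd : ∀ τ, HasDerivAt ψ (Φ' τ + lam * f0) τ := by
    intro τ
    have h2 : HasDerivAt (fun τ : ℝ => lam * f0 * τ) (lam * f0) τ := by
      simpa using (hasDerivAt_id τ).const_mul (lam * f0)
    exact (hΦd τ).add h2
  have hψcont : Continuous ψ := continuous_iff_continuousAt.2 fun τ => (hψd τ).continuousAt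
  have hψmono : MonotoneOn ψ (Icc 0 t₀) := by
    apply monotoneOn_of_deriv_nonneg (convex_Icc 0 t₀) hψcont.continuousOn
    · intro s hs
      exact (hψd s).differentiableAt.differentiableWithinAt
    · intro s hs
      rw [interior_Icc] at hs
      rw [(hψd s).deriv]
      have h1 : Φ' 0 ≤ Φ' s := hΦ'mono ⟨le_refl _, ht₀⟩ (Ioo_subset_Icc_self hs) hs.1.le
      rw [hΦ'0] at h1
      linarith
  have hkey : 1 - lam * f0 * t₀ ≤ Φ t₀ := by
    have h1 := hψmono ⟨le_refl _, ht₀⟩ ⟨ht₀, le_refl _⟩ ht₀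
    have h2 : ψ 0 = 1 := by show Φ 0 + lam * f0 * 0 = 1; rw [hΦ0]; ring
    have h3 : ψ t₀ = Φ t₀ + lam * f0 * t₀ := rfl
    rw [h2, h3] at h1
    linarith
  -- identify Φ t₀ with Jac ^ (-lam)
  have hint : (∫ s in (0:ℝ)..t₀, pdx u (γ s) s) = A t₀ := by
    rw [hAdef]
    apply intervalIntegral.integral_congr
    intro s hs
    rw [uIcc_of_le ht₀] at hs
    show pdx u (γ s) s = fc s
    rw [hfeq s, hfcicc s hs]
  have hJac : Jac u γ t₀ = Real.exp (A t₀) := by rw [Jac, hint]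
  have hrpow : (Jac u γ t₀) ^ (-lam) = Φ t₀ := by
    rw [hJac, hΦdef]
    rw [Real.rpow_def_of_pos (Real.exp_pos _), Real.log_exp, mul_comm]
  have hprod : lam * f0 * t₀ ≤ 0 :=
    mul_nonpos_of_nonpos_of_nonneg
      (mul_nonpos_of_nonpos_of_nonneg (by linarith) hu₀'.le) ht₀
  refine ⟨by rw [hrpow]; exact hkey, by linarith, ?_⟩
  have h1 : (1:ℝ) ≤ (Jac u γ t₀) ^ (-lam) := by rw [hrpow]; linarith
  rw [hJac]
  rw [hJac, Real.rpow_def_of_pos (Real.exp_pos _), Real.log_exp] at h1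
  have h2 : 0 ≤ A t₀ * -lam := Real.one_le_exp_iff.mp h1
  have h3 : 0 ≤ A t₀ := by nlinarith
  exact Real.one_le_exp h3
end
end

section
/- Let (λ,κ) = (−1/2, 0). Let (u,b) be a smooth solution of the generalized system on [0,1]×[0,T) satisfying Dirichlet or periodic boundary conditions, with a Lagrangian trajectory γ(α₀,·) starting at α₀ ∈ [0,1]. Suppose b₀(α₀) = 0 and w₀ := b₀'(α₀) > 0, and that E₀ := ∫₀¹(u₀'(x))² dx + ∫₀¹(b₀'(x))² dx ≤ 1. Write z(t) := ∂ₓu(γ(α₀,t),t) and w(t) := ∂ₓb(γ(α₀,t),t). Then for all t ∈ [0,T): w(t) > 0 and w₀·w(t) + (w₀/w(t))·(1 + z(t)²) ≤ (w₀² + 1 + u₀'(α₀)²)·e^{(1−E₀)t}. In particular, for every finite T' ≤ T, sup_{t∈[0,T')} (|z(t)| + w(t) + 1/w(t)) < ∞, i.e., neither ∂ₓu nor ∂ₓb blows up in finite time along the trajectory γ(α₀,·). -/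
open Real Set Filter Topology MeasureTheory intervalIntegral

noncomputable section

section slices
variable {F : ℝ × ℝ → ℝ}

lemma hasDerivAt_sliceX (hF : Differentiable ℝ F) (x t : ℝ) :
    HasDerivAt (fun y => F (y, t)) (fderiv ℝ F (x, t) (1, 0)) x := by
  have h1 : HasDerivAt (fun y : ℝ => ((y, t) : ℝ × ℝ)) ((1:ℝ), (0:ℝ)) x :=
    (hasDerivAt_id x).prodMk (hasDerivAt_const x t)
  exact (hF (x, t)).hasFDerivAt.comp_hasDerivAt x h1

lemma hasDerivAt_sliceT (hF : Differentiable ℝ F) (x t : ℝ) :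
    HasDerivAt (fun s => F (x, s)) (fderiv ℝ F (x, t) (0, 1)) t := by
  have h1 : HasDerivAt (fun s : ℝ => ((x, s) : ℝ × ℝ)) ((0:ℝ), (1:ℝ)) t :=
    (hasDerivAt_const t x).prodMk (hasDerivAt_id t)
  exact (hF (x, t)).hasFDerivAt.comp_hasDerivAt t h1

lemma contDiff_fderiv_apply (hF : ContDiff ℝ (⊤ : ℕ∞) F) (v : ℝ × ℝ) :
    ContDiff ℝ (⊤ : ℕ∞) (fun p => fderiv ℝ F p v) :=
  (hF.fderiv_right (by simp)).clm_apply contDiff_const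

lemma fderiv_fderiv_apply (hF : ContDiff ℝ (⊤ : ℕ∞) F) (v w q : ℝ × ℝ) :
    fderiv ℝ (fun p => fderiv ℝ F p v) q w = (fderiv ℝ (fderiv ℝ F) q w) v := by
  have h1 : HasFDerivAt (fderiv ℝ F) (fderiv ℝ (fderiv ℝ F) q) q :=
    (((hF.fderiv_right (m := (⊤ : ℕ∞)) (by simp)).differentiable (by simp)) q).hasFDerivAt
  have h2 : HasFDerivAt (fun p => fderiv ℝ F p v)
      ((ContinuousLinearMap.apply ℝ ℝ v).comp (fderiv ℝ (fderiv ℝ F) q)) q :=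
    (ContinuousLinearMap.apply ℝ ℝ v).hasFDerivAt.comp q h1
  rw [h2.fderiv]; rfl

lemma fderiv_swap (hF : ContDiff ℝ (⊤ : ℕ∞) F) (v w q : ℝ × ℝ) :
    fderiv ℝ (fun p => fderiv ℝ F p v) q w = fderiv ℝ (fun p => fderiv ℝ F p w) q v := by
  rw [fderiv_fderiv_apply hF, fderiv_fderiv_apply hF]
  exact second_derivative_symmetric (fun y => ((hF.differentiable (by simp)) y).hasFDerivAt)
    ((((hF.fderiv_right (m := (⊤ : ℕ∞)) (by simp)).differentiable (by simp)) q).hasFDerivAt) w v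

end slices

section fields
variable {f : ℝ → ℝ → ℝ}

/-- uncurried version -/
def unc (f : ℝ → ℝ → ℝ) : ℝ × ℝ → ℝ := fun p => f p.1 p.2
def fieldX (f : ℝ → ℝ → ℝ) : ℝ × ℝ → ℝ := fun p => fderiv ℝ (unc f) p (1, 0)
def fieldT (f : ℝ → ℝ → ℝ) : ℝ × ℝ → ℝ := fun p => fderiv ℝ (unc f) p (0, 1)

variable (hf : ContDiff ℝ (⊤ : ℕ∞) (unc f))
include hf

lemma contDiff_fieldX : ContDiff ℝ (⊤ : ℕ∞) (fieldX f) := contDiff_fderiv_apply hf _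
lemma contDiff_fieldT : ContDiff ℝ (⊤ : ℕ∞) (fieldT f) := contDiff_fderiv_apply hf _

lemma hasDerivAt_slice_x (x t : ℝ) : HasDerivAt (fun y => f y t) (fieldX f (x, t)) x :=
  hasDerivAt_sliceX (hf.differentiable (by simp)) x t

lemma hasDerivAt_slice_t (x t : ℝ) : HasDerivAt (fun s => f x s) (fieldT f (x, t)) t :=
  hasDerivAt_sliceT (hf.differentiable (by simp)) x t

lemma pdx_eq_s14 (x t : ℝ) : pdx f x t = fieldX f (x, t) := (hasDerivAt_slice_x hf x t).deriv
lemma pdt_eq_s14 (x t : ℝ) : pdt f x t = fieldT f (x, t) := (hasDerivAt_slice_t hf x t).deriv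

lemma pdxx_eq_s14 (x t : ℝ) : pdxx f x t = fderiv ℝ (fieldX f) (x, t) (1, 0) := by
  have h1 : deriv (fun y => f y t) = fun y => fieldX f (y, t) := by
    funext y; exact (hasDerivAt_slice_x hf y t).deriv
  have h2 : HasDerivAt (fun y => fieldX f (y, t)) (fderiv ℝ (fieldX f) (x, t) (1, 0)) x :=
    hasDerivAt_sliceX ((contDiff_fieldX hf).differentiable (by simp)) x t
  rw [pdxx, iteratedDeriv_succ, iteratedDeriv_one, h1]
  exact h2.deriv

lemma pdtx_eq_s14 (x t : ℝ) : pdtx f x t = fderiv ℝ (fieldX f) (x, t) (0, 1) := by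
  have h1 : (fun s => pdx f x s) = fun s => fieldX f (x, s) := by
    funext s; exact pdx_eq_s14 hf x s
  have h2 : HasDerivAt (fun s => fieldX f (x, s)) (fderiv ℝ (fieldX f) (x, t) (0, 1)) t :=
    hasDerivAt_sliceT ((contDiff_fieldX hf).differentiable (by simp)) x t
  rw [pdtx, h1]; exact h2.deriv

lemma fieldXT_swap (q : ℝ × ℝ) :
    fderiv ℝ (fieldX f) q (0, 1) = fderiv ℝ (fieldT f) q (1, 0) :=
  fderiv_swap hf _ _ q

end fields

section energy
variable {T : EReal} {u b : ℝ → ℝ → ℝ}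

lemma hasDerivAt_integral_sq {P : ℝ × ℝ → ℝ} (hP : ContDiff ℝ (⊤ : ℕ∞) P) (s₀ : ℝ) :
    HasDerivAt (fun s => ∫ x in (0:ℝ)..1, P (x, s) ^ 2)
      (∫ x in (0:ℝ)..1, 2 * P (x, s₀) * fderiv ℝ P (x, s₀) (0, 1)) s₀ := by
  have hPc : Continuous P := hP.continuous
  have hPTc : Continuous (fun p => fderiv ℝ P p (0, 1)) := (contDiff_fderiv_apply hP _).continuous
  have hc : Continuous (fun p : ℝ × ℝ => 2 * P p * fderiv ℝ P p (0, 1)) :=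
    (continuous_const.mul hPc).mul hPTc
  obtain ⟨M, hM⟩ := (isCompact_Icc.prod isCompact_Icc :
      IsCompact (Icc (0:ℝ) 1 ×ˢ Icc (s₀ - 1) (s₀ + 1))).exists_bound_of_continuousOn
      hc.continuousOn
  have key := intervalIntegral.hasDerivAt_integral_of_dominated_loc_of_deriv_le
    (F := fun s x => P (x, s) ^ 2)
    (F' := fun s x => 2 * P (x, s) * fderiv ℝ P (x, s) (0, 1))
    (x₀ := s₀) (a := 0) (b := 1) (bound := fun _ => M) (μ := volume) (s := Metric.ball s₀ 1) (Metric.ball_mem_nhds s₀ one_pos)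
    (Eventually.of_forall (fun s =>
      (((hPc.comp (continuous_id.prodMk continuous_const)).pow 2).aestronglyMeasurable)))
    ((((hPc.comp (continuous_id.prodMk continuous_const)).pow 2)).intervalIntegrable 0 1)
    ((hc.comp (continuous_id.prodMk continuous_const)).aestronglyMeasurable)
    (Eventually.of_forall ?_) intervalIntegrable_const
    (Eventually.of_forall ?_)
  · exact key.2
  · intro x hx s hs
    rw [uIoc_of_le (zero_le_one' ℝ)] at hx
    have hxI : x ∈ Icc (0:ℝ) 1 := ⟨le_of_lt hx.1, hx.2⟩
    have hsI : s ∈ Icc (s₀ - 1) (s₀ + 1) := by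
      have := mem_ball_iff_norm.1 hs
      rw [Real.norm_eq_abs, abs_sub_lt_iff] at this
      constructor <;> linarith [this.1, this.2]
    exact hM (x, s) (mk_mem_prod hxI hsI)
  · intro x _ s _
    have h := (hasDerivAt_sliceT (hP.differentiable (by simp)) x s).pow 2
    refine h.congr_deriv ?_
    simp

def Efun (u b : ℝ → ℝ → ℝ) : ℝ → ℝ :=
  fun s => (∫ x in (0:ℝ)..1, (pdx u x s) ^ 2) + (∫ x in (0:ℝ)..1, (pdx b x s) ^ 2)

lemma hasDerivAt_Efun (hu : ContDiff ℝ (⊤ : ℕ∞) (unc u)) (hb : ContDiff ℝ (⊤ : ℕ∞) (unc b)) (s : ℝ) :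
    HasDerivAt (Efun u b)
      ((∫ x in (0:ℝ)..1, 2 * fieldX u (x, s) * fderiv ℝ (fieldX u) (x, s) (0, 1))
        + (∫ x in (0:ℝ)..1, 2 * fieldX b (x, s) * fderiv ℝ (fieldX b) (x, s) (0, 1))) s := by
  have h1 := hasDerivAt_integral_sq (contDiff_fieldX hu) s
  have h2 := hasDerivAt_integral_sq (contDiff_fieldX hb) s
  have hE : Efun u b = fun s => (∫ x in (0:ℝ)..1, (fieldX u (x, s)) ^ 2)
      + (∫ x in (0:ℝ)..1, (fieldX b (x, s)) ^ 2) := by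
    funext s; simp only [Efun, pdx_eq_s14 hu, pdx_eq_s14 hb]
  rw [hE]; exact h1.add h2

lemma ibp_aux {A V : ℝ × ℝ → ℝ} (hA : ContDiff ℝ (⊤ : ℕ∞) A) (hV : ContDiff ℝ (⊤ : ℕ∞) V) (s : ℝ) :
    ∫ x in (0:ℝ)..1, (fderiv ℝ A (x, s) (1, 0) * V (x, s) ^ 2
        + A (x, s) * (2 * V (x, s) * fderiv ℝ V (x, s) (1, 0)))
      = A (1, s) * V (1, s) ^ 2 - A (0, s) * V (0, s) ^ 2 := by
  have cxs : Continuous (fun x : ℝ => ((x, s) : ℝ × ℝ)) := continuous_id.prodMk continuous_const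
  have c1 : Continuous fun x : ℝ => fderiv ℝ A (x, s) (1, 0) :=
    ((contDiff_fderiv_apply hA _).continuous).comp cxs
  have c2 : Continuous fun x : ℝ => A (x, s) := hA.continuous.comp cxs
  have c3 : Continuous fun x : ℝ => V (x, s) := hV.continuous.comp cxs
  have c4 : Continuous fun x : ℝ => fderiv ℝ V (x, s) (1, 0) :=
    ((contDiff_fderiv_apply hV _).continuous).comp cxs
  apply intervalIntegral.integral_eq_sub_of_hasDerivAt (f := fun x => A (x, s) * V (x, s) ^ 2)
  · intro x _
    have h := (hasDerivAt_sliceX (hA.differentiable (by simp)) x s).mul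
      ((hasDerivAt_sliceX (hV.differentiable (by simp)) x s).pow 2)
    refine h.congr_deriv ?_
    simp only [Pi.pow_apply]
    push_cast; ring
  · exact ((c1.mul (c3.pow 2)).add
      (c2.mul ((continuous_const.mul c3).mul c4))).intervalIntegrable 0 1

lemma ftc0 (hu : ContDiff ℝ (⊤ : ℕ∞) (unc u)) (s : ℝ) :
    ∫ x in (0:ℝ)..1, fieldX u (x, s) = u 1 s - u 0 s := by
  have cxs : Continuous (fun x : ℝ => ((x, s) : ℝ × ℝ)) := continuous_id.prodMk continuous_const
  apply intervalIntegral.integral_eq_sub_of_hasDerivAt (f := fun x => u x s)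
  · intro x _; exact hasDerivAt_slice_x hu x s
  · exact ((contDiff_fieldX hu).continuous.comp cxs).intervalIntegrable 0 1

end energy

section core
variable {T : EReal} {u b : ℝ → ℝ → ℝ}


lemma uxt_eq (hsys : GSys (-(1/2)) 0 T u b) {x : ℝ} (hx : x ∈ Icc (0:ℝ) 1)
    {s : ℝ} (hs : 0 ≤ s) (hsT : (s : EReal) < T) :
    fderiv ℝ (fieldX u) (x, s) (0, 1)
      = -(u x s * fderiv ℝ (fieldX u) (x, s) (1, 0)) - (1/2) * fieldX u (x, s) ^ 2
        + (1/2) * fieldX b (x, s) ^ 2 + Iterm (-(1/2)) 0 u b s := by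
  obtain ⟨hu, hb, heq⟩ := hsys
  have h := (heq x hx s hs hsT).1
  rw [pdtx_eq_s14 hu, pdxx_eq_s14 hu, pdx_eq_s14 hu, pdx_eq_s14 hb] at h
  simp only [zero_mul] at h
  linarith [h]

lemma bxt_eq (hsys : GSys (-(1/2)) 0 T u b) {x : ℝ} (hx : x ∈ Icc (0:ℝ) 1)
    {s : ℝ} (hs : 0 ≤ s) (hsT : (s : EReal) < T) :
    fderiv ℝ (fieldX b) (x, s) (0, 1)
      = -(fieldX u (x, s) * fieldX b (x, s) + u x s * fderiv ℝ (fieldX b) (x, s) (1, 0)) := by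
  obtain ⟨hu, hb, heq⟩ := hsys
  rw [fieldXT_swap hb]
  have hdg : HasDerivAt (fun y => -(u y s * fieldX b (y, s)))
      (-(fieldX u (x, s) * fieldX b (x, s) + u x s * fderiv ℝ (fieldX b) (x, s) (1, 0))) x :=
    ((hasDerivAt_slice_x hu x s).mul
      (hasDerivAt_sliceX ((contDiff_fieldX hb).differentiable (by simp)) x s)).neg
  have hdf : HasDerivAt (fun y => fieldT b (y, s)) (fderiv ℝ (fieldT b) (x, s) (1, 0)) x :=
    hasDerivAt_sliceX ((contDiff_fieldT hb).differentiable (by simp)) x s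
  have hEq : EqOn (fun y => fieldT b (y, s)) (fun y => -(u y s * fieldX b (y, s)))
      (Icc (0:ℝ) 1) := by
    intro y hy
    have h2 := (heq y hy s hs hsT).2
    rw [pdx_eq_s14 hb] at h2
    simp only [zero_mul] at h2
    have h3 : pdt b y s = -(u y s * fieldX b (y, s)) := by linarith [h2]
    simpa [pdt_eq_s14 hb] using h3
  calc fderiv ℝ (fieldT b) (x, s) (1, 0)
      = deriv (fun y => fieldT b (y, s)) x := hdf.deriv.symm
    _ = derivWithin (fun y => fieldT b (y, s)) (Icc 0 1) x :=
        (hdf.differentiableAt.derivWithin ((uniqueDiffOn_Icc one_pos) x hx)).symm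
    _ = derivWithin (fun y => -(u y s * fieldX b (y, s))) (Icc 0 1) x :=
        derivWithin_congr hEq (hEq hx)
    _ = deriv (fun y => -(u y s * fieldX b (y, s))) x :=
        hdg.differentiableAt.derivWithin ((uniqueDiffOn_Icc one_pos) x hx)
    _ = _ := hdg.deriv

lemma energy_deriv_zero (hsys : GSys (-(1/2)) 0 T u b)
    (hbc : DirichletBC T u b ∨ PeriodicBC T u b)
    (s : ℝ) (hs : 0 ≤ s) (hsT : (s : EReal) < T) :
    (∫ x in (0:ℝ)..1, 2 * fieldX u (x, s) * fderiv ℝ (fieldX u) (x, s) (0, 1))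
      + (∫ x in (0:ℝ)..1, 2 * fieldX b (x, s) * fderiv ℝ (fieldX b) (x, s) (0, 1)) = 0 := by
  have hu := hsys.1
  have hb := hsys.2.1
  set J := Iterm (-(1/2)) 0 u b s with hJ
  have hGt : ∀ x ∈ Icc (0:ℝ) 1, fderiv ℝ (fieldX u) (x, s) (0, 1)
      = -(u x s * fderiv ℝ (fieldX u) (x, s) (1, 0)) - (1/2) * fieldX u (x, s) ^ 2
        + (1/2) * fieldX b (x, s) ^ 2 + J := fun x hx => uxt_eq hsys hx hs hsT
  have hWt : ∀ x ∈ Icc (0:ℝ) 1, fderiv ℝ (fieldX b) (x, s) (0, 1)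
      = -(fieldX u (x, s) * fieldX b (x, s) + u x s * fderiv ℝ (fieldX b) (x, s) (1, 0)) :=
    fun x hx => bxt_eq hsys hx hs hsT
  -- boundary terms vanish
  have hB0 : u 1 s - u 0 s = 0 := by
    rcases hbc with h | h
    · obtain ⟨h0, h1, -, -⟩ := h s hs hsT; rw [h0, h1]; ring
    · obtain ⟨h0, -, -, -⟩ := h s hs hsT; rw [h0]; ring
  have hBu : u 1 s * fieldX u (1, s) ^ 2 - u 0 s * fieldX u (0, s) ^ 2 = 0 := by
    rcases hbc with h | h
    · obtain ⟨h0, h1, -, -⟩ := h s hs hsT; rw [h0, h1]; ring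
    · obtain ⟨h0, h1, -, -⟩ := h s hs hsT
      rw [pdx_eq_s14 hu, pdx_eq_s14 hu] at h1
      rw [h0, h1]; ring
  have hBb : u 1 s * fieldX b (1, s) ^ 2 - u 0 s * fieldX b (0, s) ^ 2 = 0 := by
    rcases hbc with h | h
    · obtain ⟨h0, h1, -, -⟩ := h s hs hsT; rw [h0, h1]; ring
    · obtain ⟨h0, -, -, h3⟩ := h s hs hsT
      rw [pdx_eq_s14 hb, pdx_eq_s14 hb] at h3
      rw [h0, h3]; ring
  -- continuity facts
  have cxs : Continuous (fun x : ℝ => ((x, s) : ℝ × ℝ)) := continuous_id.prodMk continuous_const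
  have cu : Continuous fun x : ℝ => u x s := hu.continuous.comp cxs
  have cG : Continuous fun x : ℝ => fieldX u (x, s) := (contDiff_fieldX hu).continuous.comp cxs
  have cW : Continuous fun x : ℝ => fieldX b (x, s) := (contDiff_fieldX hb).continuous.comp cxs
  have cGx : Continuous fun x : ℝ => fderiv ℝ (fieldX u) (x, s) (1, 0) :=
    ((contDiff_fderiv_apply (contDiff_fieldX hu) _).continuous).comp cxs
  have cWx : Continuous fun x : ℝ => fderiv ℝ (fieldX b) (x, s) (1, 0) :=
    ((contDiff_fderiv_apply (contDiff_fieldX hb) _).continuous).comp cxs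
  have cGt : Continuous fun x : ℝ => fderiv ℝ (fieldX u) (x, s) (0, 1) :=
    ((contDiff_fderiv_apply (contDiff_fieldX hu) _).continuous).comp cxs
  have cWt : Continuous fun x : ℝ => fderiv ℝ (fieldX b) (x, s) (0, 1) :=
    ((contDiff_fderiv_apply (contDiff_fieldX hb) _).continuous).comp cxs
  set g1 : ℝ → ℝ := fun x => fieldX u (x, s) * fieldX u (x, s) ^ 2
      + u x s * (2 * fieldX u (x, s) * fderiv ℝ (fieldX u) (x, s) (1, 0)) with hg1
  set g2 : ℝ → ℝ := fun x => fieldX u (x, s) * fieldX b (x, s) ^ 2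
      + u x s * (2 * fieldX b (x, s) * fderiv ℝ (fieldX b) (x, s) (1, 0)) with hg2
  have cg1 : Continuous g1 := (cG.mul (cG.pow 2)).add (cu.mul ((continuous_const.mul cG).mul cGx))
  have cg2 : Continuous g2 := (cG.mul (cW.pow 2)).add (cu.mul ((continuous_const.mul cW).mul cWx))
  have i1 : IntervalIntegrable (fun x => 2 * fieldX u (x, s) * fderiv ℝ (fieldX u) (x, s) (0, 1))
      volume 0 1 := ((continuous_const.mul cG).mul cGt).intervalIntegrable 0 1
  have i2 : IntervalIntegrable (fun x => 2 * fieldX b (x, s) * fderiv ℝ (fieldX b) (x, s) (0, 1))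
      volume 0 1 := ((continuous_const.mul cW).mul cWt).intervalIntegrable 0 1
  have ibpu : ∫ x in (0:ℝ)..1, g1 x
      = u 1 s * fieldX u (1, s) ^ 2 - u 0 s * fieldX u (0, s) ^ 2 :=
    ibp_aux hu (contDiff_fieldX hu) s
  have ibpb : ∫ x in (0:ℝ)..1, g2 x
      = u 1 s * fieldX b (1, s) ^ 2 - u 0 s * fieldX b (0, s) ^ 2 :=
    ibp_aux hu (contDiff_fieldX hb) s
  have hcongr : EqOn
      (fun x => 2 * fieldX u (x, s) * fderiv ℝ (fieldX u) (x, s) (0, 1)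
        + 2 * fieldX b (x, s) * fderiv ℝ (fieldX b) (x, s) (0, 1))
      (fun x => (-(g1 x) + -(g2 x)) + (2 * J) * fieldX u (x, s)) (uIcc (0:ℝ) 1) := by
    intro x hx
    rw [uIcc_of_le (zero_le_one' ℝ)] at hx
    simp only [hg1, hg2]
    rw [hGt x hx, hWt x hx]
    ring
  calc (∫ x in (0:ℝ)..1, 2 * fieldX u (x, s) * fderiv ℝ (fieldX u) (x, s) (0, 1))
      + (∫ x in (0:ℝ)..1, 2 * fieldX b (x, s) * fderiv ℝ (fieldX b) (x, s) (0, 1))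
      = ∫ x in (0:ℝ)..1, (2 * fieldX u (x, s) * fderiv ℝ (fieldX u) (x, s) (0, 1)
          + 2 * fieldX b (x, s) * fderiv ℝ (fieldX b) (x, s) (0, 1)) :=
        (intervalIntegral.integral_add i1 i2).symm
    _ = ∫ x in (0:ℝ)..1, ((-(g1 x) + -(g2 x)) + (2 * J) * fieldX u (x, s)) :=
        intervalIntegral.integral_congr hcongr
    _ = (∫ x in (0:ℝ)..1, (-(g1 x) + -(g2 x))) + ∫ x in (0:ℝ)..1, (2 * J) * fieldX u (x, s) :=
        intervalIntegral.integral_add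
          ((cg1.neg.intervalIntegrable 0 1).add (cg2.neg.intervalIntegrable 0 1))
          ((cG.intervalIntegrable 0 1).const_mul _)
    _ = ((∫ x in (0:ℝ)..1, -(g1 x)) + ∫ x in (0:ℝ)..1, -(g2 x))
          + (2 * J) * ∫ x in (0:ℝ)..1, fieldX u (x, s) := by
        rw [intervalIntegral.integral_add (f := fun x => -(g1 x)) (g := fun x => -(g2 x))
          (cg1.neg.intervalIntegrable 0 1)
          (cg2.neg.intervalIntegrable 0 1), intervalIntegral.integral_const_mul]
    _ = (-(∫ x in (0:ℝ)..1, g1 x) + -(∫ x in (0:ℝ)..1, g2 x))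
          + (2 * J) * (u 1 s - u 0 s) := by
        rw [intervalIntegral.integral_neg, intervalIntegral.integral_neg, ftc0 hu s]
    _ = 0 := by
        rw [ibpu, ibpb]
        linear_combination (-1 : ℝ) * hBu + (-1 : ℝ) * hBb + (2 * J) * hB0

lemma energy_const (hsys : GSys (-(1/2)) 0 T u b)
    (hbc : DirichletBC T u b ∨ PeriodicBC T u b) :
    ∀ t : ℝ, 0 ≤ t → (t : EReal) < T → Efun u b t = Efun u b 0 := by
  have hu := hsys.1
  have hb := hsys.2.1
  intro t ht htT
  have key : ∀ s ∈ Ico (0:ℝ) t, HasDerivWithinAt (Efun u b) 0 (Ici s) s := by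
    intro s hs
    have hsT : (s : EReal) < T := lt_trans (by exact_mod_cast hs.2) htT
    have h := hasDerivAt_Efun hu hb s
    rw [energy_deriv_zero hsys hbc s hs.1 hsT] at h
    exact h.hasDerivWithinAt
  exact constant_of_has_deriv_right_zero
    (fun s _ => (hasDerivAt_Efun hu hb s).continuousAt.continuousWithinAt) key t ⟨ht, le_refl t⟩

end core

section traj
variable {T : EReal} {u b : ℝ → ℝ → ℝ}

lemma Iterm_eq (hsys : GSys (-(1/2)) 0 T u b) (hbc : DirichletBC T u b ∨ PeriodicBC T u b)
    {s : ℝ} (hs : 0 ≤ s) (hsT : (s : EReal) < T) :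
    Iterm (-(1/2)) 0 u b s = -(1/2) * Efun u b 0 := by
  have h := energy_const hsys hbc s hs hsT
  rw [Iterm]
  simp only [Efun] at h ⊢
  linarith [h]

lemma traj_deriv (hsys : GSys (-(1/2)) 0 T u b) (hbc : DirichletBC T u b ∨ PeriodicBC T u b)
    {α₀ : ℝ} {γ : ℝ → ℝ} (hγ : Traj T u α₀ γ)
    {s : ℝ} (hs : 0 ≤ s) (hsT : (s : EReal) < T) :
    HasDerivAt (fun r => fieldX u (γ r, r))
      (-(1/2) * fieldX u (γ s, s) ^ 2 + (1/2) * fieldX b (γ s, s) ^ 2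
        - (1/2) * Efun u b 0) s ∧
    HasDerivAt (fun r => fieldX b (γ r, r))
      (-(fieldX u (γ s, s) * fieldX b (γ s, s))) s := by
  have hu := hsys.1
  have hb := hsys.2.1
  obtain ⟨hmem, hder⟩ := hγ.2 s hs hsT
  have hpath : HasDerivAt (fun r => ((γ r, r) : ℝ × ℝ)) (u (γ s) s, 1) s :=
    hder.prodMk (hasDerivAt_id s)
  have split : ∀ (P : ℝ × ℝ → ℝ), ContDiff ℝ (⊤ : ℕ∞) P →
      HasDerivAt (fun r => P (γ r, r))
        (u (γ s) s * fderiv ℝ P (γ s, s) (1, 0) + fderiv ℝ P (γ s, s) (0, 1)) s := by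
    intro P hP
    have h := HasFDerivAt.comp_hasDerivAt (f := fun r => ((γ r, r) : ℝ × ℝ)) s
      ((hP.differentiable (by simp)) (γ s, s)).hasFDerivAt hpath
    refine h.congr_deriv ?_
    have hv : ((u (γ s) s, (1:ℝ)) : ℝ × ℝ)
        = u (γ s) s • ((1:ℝ), (0:ℝ)) + ((0:ℝ), (1:ℝ)) := by
      simp [Prod.ext_iff]
    rw [hv, map_add, ContinuousLinearMap.map_smul, smul_eq_mul]
  constructor
  · have h := split (fieldX u) (contDiff_fieldX hu)
    rw [uxt_eq hsys hmem hs hsT, Iterm_eq hsys hbc hs hsT] at h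
    convert h using 1; ring
  · have h := split (fieldX b) (contDiff_fieldX hb)
    rw [bxt_eq hsys hmem hs hsT] at h
    convert h using 1; ring

end traj


set_option maxHeartbeats 2000000 in
/-- blowup suppression for `(λ,κ) = (−1/2,0)`: if `b₀(α₀) = 0`,
`w₀ = b₀'(α₀) > 0` and `E₀ ≤ 1`, then `w(t) = bₓ(γ(α₀,t),t) > 0` and
`w₀ w + (w₀/w)(1+z²) ≤ (w₀² + 1 + u₀'(α₀)²) e^{(1−E₀)t}`; in particular neither `uₓ` nor `bₓ`
blows up in finite time along the trajectory. -/
theorem statement14 (T : EReal) (hT : 0 < T)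
    (u b : ℝ → ℝ → ℝ)
    (hsys : GSys (-(1/2)) 0 T u b)
    (hbc : DirichletBC T u b ∨ PeriodicBC T u b)
    (α₀ : ℝ) (hα₀ : α₀ ∈ Icc (0:ℝ) 1)
    (γ : ℝ → ℝ) (hγ : Traj T u α₀ γ)
    (hb₀ : b α₀ 0 = 0) (hw₀ : 0 < pdx b α₀ 0)
    (hsmall : (∫ x in (0:ℝ)..1, (pdx u x 0) ^ 2) + (∫ x in (0:ℝ)..1, (pdx b x 0) ^ 2) ≤ 1) :
    (∀ t : ℝ, 0 ≤ t → (t : EReal) < T →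
      0 < pdx b (γ t) t ∧
      pdx b α₀ 0 * pdx b (γ t) t
        + (pdx b α₀ 0 / pdx b (γ t) t) * (1 + (pdx u (γ t) t) ^ 2)
        ≤ ((pdx b α₀ 0) ^ 2 + 1 + (pdx u α₀ 0) ^ 2) *
            Real.exp ((1 - ((∫ x in (0:ℝ)..1, (pdx u x 0) ^ 2)
              + (∫ x in (0:ℝ)..1, (pdx b x 0) ^ 2))) * t)) ∧
    (∀ T' : ℝ, (T' : EReal) ≤ T →
      ∃ C : ℝ, ∀ t : ℝ, 0 ≤ t → t < T' →
        |pdx u (γ t) t| + pdx b (γ t) t + 1 / pdx b (γ t) t ≤ C) := by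
  have hu := hsys.1
  have hb := hsys.2.1
  set E₀ : ℝ := (∫ x in (0:ℝ)..1, (pdx u x 0) ^ 2) + (∫ x in (0:ℝ)..1, (pdx b x 0) ^ 2)
    with hE₀
  set K : ℝ := 1 - E₀ with hK
  have hK0 : 0 ≤ K := by rw [hK]; linarith [hsmall]
  set δ : ℝ := (pdx b α₀ 0) ^ 2 + 1 + (pdx u α₀ 0) ^ 2 with hδ
  set w₀ : ℝ := pdx b α₀ 0 with hw₀def
  set z : ℝ → ℝ := fun s => fieldX u (γ s, s) with hzdef
  set w : ℝ → ℝ := fun s => fieldX b (γ s, s) with hwdef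
  have hpz : ∀ s, pdx u (γ s) s = z s := fun s => pdx_eq_s14 hu _ _
  have hpw : ∀ s, pdx b (γ s) s = w s := fun s => pdx_eq_s14 hb _ _
  have hz0 : z 0 = pdx u α₀ 0 := by
    show fieldX u (γ 0, 0) = _; rw [hγ.1]; exact (pdx_eq_s14 hu α₀ 0).symm
  have hw0 : w 0 = w₀ := by
    show fieldX b (γ 0, 0) = _; rw [hγ.1]; exact (pdx_eq_s14 hb α₀ 0).symm
  have hδpos : 0 < δ := by rw [hδ]; positivity
  have hDeriv : ∀ s : ℝ, 0 ≤ s → (s : EReal) < T →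
      HasDerivAt z (-(1/2) * z s ^ 2 + (1/2) * w s ^ 2 - (1/2) * E₀) s ∧
      HasDerivAt w (-(z s * w s)) s := by
    intro s hs hsT
    have h := traj_deriv hsys hbc hγ hs hsT
    rw [show Efun u b 0 = E₀ from rfl] at h
    exact h
  -- Part A : the pointwise bound
  have partA : ∀ t : ℝ, 0 ≤ t → (t : EReal) < T → 0 < w t ∧
      w₀ * w t + (w₀ / w t) * (1 + z t ^ 2) ≤ δ * Real.exp (K * t) := by
    intro t ht htT
    have hsub : ∀ s ∈ Icc (0:ℝ) t, 0 ≤ s ∧ (s : EReal) < T := by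
      intro s hs
      refine ⟨hs.1, lt_of_le_of_lt ?_ htT⟩
      exact_mod_cast hs.2
    have hzc : ContinuousOn z (Icc 0 t) := fun s hs =>
      ((hDeriv s (hsub s hs).1 (hsub s hs).2).1.continuousAt).continuousWithinAt
    have hwc : ContinuousOn w (Icc 0 t) := fun s hs =>
      ((hDeriv s (hsub s hs).1 (hsub s hs).2).2.continuousAt).continuousWithinAt
    obtain ⟨Kz, hKz⟩ := isCompact_Icc.exists_bound_of_continuousOn hzc
    -- positivity of w along the trajectory
    have hwpos : ∀ s ∈ Icc (0:ℝ) t, 0 < w s := by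
      by_contra hcon
      push_neg at hcon
      obtain ⟨s, hsmem, hsle⟩ := hcon
      have hzero : ∃ s₀ ∈ Icc (0:ℝ) t, w s₀ = 0 := by
        rcases eq_or_lt_of_le hsle with h | h
        · exact ⟨s, hsmem, h⟩
        · have hIcc : Icc (0:ℝ) s ⊆ Icc 0 t := Icc_subset_Icc le_rfl hsmem.2
          have him := intermediate_value_Icc' hsmem.1 (hwc.mono hIcc)
          have h0mem : (0:ℝ) ∈ Icc (w s) (w 0) := ⟨hsle, by rw [hw0]; exact hw₀.le⟩
          obtain ⟨s₀, hs₀, hws₀⟩ := him h0mem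
          exact ⟨s₀, hIcc hs₀, hws₀⟩
      obtain ⟨s₀, hs₀mem, hws₀⟩ := hzero
      have hvd : ∀ r ∈ Ico (0:ℝ) s₀, HasDerivWithinAt (fun r => w (s₀ - r))
          (z (s₀ - r) * w (s₀ - r)) (Ici r) r := by
        intro r hr
        have hmem : s₀ - r ∈ Icc (0:ℝ) t :=
          ⟨by linarith [hr.2], by linarith [hr.1, hs₀mem.2]⟩
        have h2 := (hDeriv (s₀ - r) (hsub _ hmem).1 (hsub _ hmem).2).2
        have h1 : HasDerivAt (fun r : ℝ => s₀ - r) (-1) r := by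
          simpa using (hasDerivAt_id r).const_sub s₀
        have h3 := h2.comp r h1
        have he : -(z (s₀ - r) * w (s₀ - r)) * (-1) = z (s₀ - r) * w (s₀ - r) := by ring
        rw [he] at h3
        exact h3.hasDerivWithinAt
      have hvc : ContinuousOn (fun r => w (s₀ - r)) (Icc 0 s₀) := by
        apply hwc.comp ((continuous_const.sub continuous_id).continuousOn)
        intro r hr
        simp only [Pi.sub_apply, id_eq]
        rw [Set.mem_Icc]
        exact ⟨by linarith [hr.2], by linarith [hr.1, hs₀mem.2]⟩
      have hgr := norm_le_gronwallBound_of_norm_deriv_right_le (δ := 0) (K := Kz) (ε := 0)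
        hvc hvd (by simp [hws₀]) ?_ s₀ ⟨hs₀mem.1, le_rfl⟩
      · rw [gronwallBound_ε0] at hgr
        simp only [sub_self, zero_mul] at hgr
        rw [Real.norm_eq_abs, hw0, abs_of_pos hw₀] at hgr
        linarith
      · intro r hr
        have hmem : s₀ - r ∈ Icc (0:ℝ) t :=
          ⟨by linarith [hr.2], by linarith [hr.1, hs₀mem.2]⟩
        calc ‖z (s₀ - r) * w (s₀ - r)‖ = ‖z (s₀ - r)‖ * ‖w (s₀ - r)‖ := norm_mul _ _
          _ ≤ Kz * ‖(fun r => w (s₀ - r)) r‖ + 0 := by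
              rw [add_zero]
              exact mul_le_mul_of_nonneg_right (hKz _ hmem) (norm_nonneg _)
    -- the Lyapunov functional
    set L : ℝ → ℝ := fun s => w₀ * w s + (w₀ / w s) * (1 + z s ^ 2) with hLdef
    have hLd : ∀ s ∈ Icc (0:ℝ) t, HasDerivAt L (K * (w₀ * z s / w s)) s := by
      intro s hs
      have hw : 0 < w s := hwpos s hs
      have hne : w s ≠ 0 := ne_of_gt hw
      obtain ⟨hzd, hwd⟩ := hDeriv s (hsub s hs).1 (hsub s hs).2
      have h1 : HasDerivAt (fun s => w₀ * w s) (w₀ * -(z s * w s)) s := hwd.const_mul w₀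
      have h2 : HasDerivAt (fun s => w₀ / w s)
          ((0 * w s - w₀ * -(z s * w s)) / w s ^ 2) s :=
        (hasDerivAt_const s w₀).div hwd hne
      have h3 : HasDerivAt (fun s => 1 + z s ^ 2)
          (((2:ℕ):ℝ) * z s ^ 1 * (-(1/2) * z s ^ 2 + (1/2) * w s ^ 2 - (1/2) * E₀)) s :=
        (hzd.pow 2).const_add 1
      have h5 := h1.add (h2.mul h3)
      refine h5.congr_deriv ?_
      rw [hK]
      field_simp
      ring
    have hLcont : ContinuousOn L (Icc 0 t) := fun s hs =>
      (hLd s hs).continuousAt.continuousWithinAt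
    have hL0 : L 0 = δ := by
      show w₀ * w 0 + (w₀ / w 0) * (1 + z 0 ^ 2) = δ
      rw [hw0, hz0, hδ, hw₀def]
      have hne : pdx b α₀ 0 ≠ 0 := ne_of_gt hw₀
      field_simp
      ring
    have hLpos : ∀ s ∈ Icc (0:ℝ) t, 0 ≤ L s := by
      intro s hs
      have hw := hwpos s hs
      have h1 : 0 ≤ w₀ * w s := le_of_lt (mul_pos hw₀ hw)
      have h2 : 0 ≤ (w₀ / w s) * (1 + z s ^ 2) :=
        le_of_lt (mul_pos (div_pos hw₀ hw) (by nlinarith [sq_nonneg (z s)]))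
      exact add_nonneg h1 h2
    have hbound : ∀ s ∈ Ico (0:ℝ) t, ‖K * (w₀ * z s / w s)‖ ≤ K * ‖L s‖ + 0 := by
      intro s hs
      have hsI : s ∈ Icc (0:ℝ) t := ⟨hs.1, hs.2.le⟩
      have hw := hwpos s hsI
      have key : w₀ * |z s| / w s ≤ L s := by
        rw [div_le_iff₀ hw]
        have hLw : L s * w s = w₀ * w s ^ 2 + w₀ * (1 + z s ^ 2) := by
          show (w₀ * w s + (w₀ / w s) * (1 + z s ^ 2)) * w s = _
          field_simp
        rw [hLw]
        nlinarith [mul_nonneg hw₀.le (sq_nonneg (|z s| - 1)), sq_abs (z s),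
          mul_nonneg hw₀.le (sq_nonneg (w s))]
      rw [add_zero, Real.norm_eq_abs, Real.norm_eq_abs, abs_mul, abs_of_nonneg hK0,
        abs_of_nonneg (hLpos s hsI)]
      apply mul_le_mul_of_nonneg_left _ hK0
      calc |w₀ * z s / w s| = w₀ * |z s| / w s := by
            rw [abs_div, abs_mul, abs_of_pos hw₀, abs_of_pos hw]
        _ ≤ L s := key
    have hgr := norm_le_gronwallBound_of_norm_deriv_right_le (δ := δ) (K := K) (ε := 0) hLcont
      (fun s hs => (hLd s ⟨hs.1, hs.2.le⟩).hasDerivWithinAt)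
      (by rw [Real.norm_eq_abs, hL0]; exact le_of_eq (abs_of_pos hδpos))
      hbound t ⟨ht, le_rfl⟩
    refine ⟨hwpos t ⟨ht, le_rfl⟩, ?_⟩
    rw [gronwallBound_ε0, sub_zero, Real.norm_eq_abs] at hgr
    calc w₀ * w t + (w₀ / w t) * (1 + z t ^ 2) = L t := rfl
      _ ≤ |L t| := le_abs_self _
      _ ≤ δ * Real.exp (K * t) := hgr
  constructor
  · intro t ht htT
    obtain ⟨h1, h2⟩ := partA t ht htT
    refine ⟨by rw [hpw t]; exact h1, ?_⟩
    rw [hpw t, hpz t]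
    exact h2
  · intro T' hT'
    refine ⟨3 * (δ * Real.exp (K * T')) / w₀, ?_⟩
    intro t ht htT'
    have htT : (t : EReal) < T := lt_of_lt_of_le (by exact_mod_cast htT') hT'
    obtain ⟨hwt, h2⟩ := partA t ht htT
    obtain ⟨M, hMdef⟩ : ∃ M : ℝ, M = δ * Real.exp (K * T') := ⟨_, rfl⟩
    rw [← hMdef]
    have hMpos : 0 < M := hMdef ▸ mul_pos hδpos (Real.exp_pos _)
    have hLM : w₀ * w t + (w₀ / w t) * (1 + z t ^ 2) ≤ M := by
      refine le_trans h2 ?_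
      rw [hMdef]
      exact mul_le_mul_of_nonneg_left
        (Real.exp_le_exp.2 (mul_le_mul_of_nonneg_left htT'.le hK0)) hδpos.le
    have hz2 : (0:ℝ) ≤ z t ^ 2 := sq_nonneg _
    have hterm2 : (w₀ / w t) * (1 + z t ^ 2) ≤ M := by
      linarith [hLM, mul_pos hw₀ hwt]
    have hterm1 : w₀ * w t ≤ M := by
      have h0 : 0 ≤ (w₀ / w t) * (1 + z t ^ 2) :=
        le_of_lt (mul_pos (div_pos hw₀ hwt) (by linarith))
      linarith
    have h3 : w₀ * (1 + z t ^ 2) ≤ M * w t := by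
      rw [div_mul_eq_mul_div, div_le_iff₀ hwt] at hterm2
      linarith [hterm2]
    have hwb : w t ≤ M / w₀ := by
      rw [le_div_iff₀ hw₀]
      linarith [hterm1]
    have hiw : 1 / w t ≤ M / w₀ := by
      rw [div_le_div_iff₀ hwt hw₀]
      linarith [h3, mul_nonneg hw₀.le hz2]
    have h5 : w₀ ^ 2 * z t ^ 2 ≤ M ^ 2 := by
      nlinarith [mul_le_mul_of_nonneg_left h3 hw₀.le,
        mul_le_mul_of_nonneg_left hterm1 hMpos.le, mul_nonneg hw₀.le hz2, sq_nonneg w₀]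
    have hzb : |z t| ≤ M / w₀ := by
      rw [le_div_iff₀ hw₀]
      nlinarith [h5, sq_abs (z t), hMpos.le, mul_nonneg (abs_nonneg (z t)) hw₀.le]
    rw [hpw t, hpz t]
    calc |z t| + w t + 1 / w t ≤ M / w₀ + M / w₀ + M / w₀ := by linarith [hzb, hwb, hiw]
      _ = 3 * M / w₀ := by ring
end
end
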